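/- arXiv:math/0512219 — 5 statements merged into one kernel-verified Lean document; each statement's English description precedes it below -/
import Mathlib

section
/- Let p + q = d with p, q ≥ 1, and let J = diag(1,…,1,−1,…,−1) with p entries +1 and q entries −1. Let (f_ε)_{ε∈(0,1)} be a moderate net of smooth functions ℝ^d → ℂ. Suppose that for every fixed real d×d matrix A with Aᵀ J A = J, the net (x ↦ f_ε(A x) − f_ε(x))_ε is negligible. Then for every family (A_ε)_{ε∈(0,1)} of real d×d matrices with A_εᵀ J A_ε = J for each ε and with all entries of A_ε bounded uniformly in ε, the net (x ↦ f_ε(A_ε x) − f_ε(x))_ε is negligible. -/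
open Matrix

def Moderate {d : ℕ} (u : ℝ → (Fin d → ℝ) → ℂ) : Prop :=
  ∀ K : Set (Fin d → ℝ), IsCompact K → ∀ n : ℕ,
    ∃ b : ℝ, ∃ C > (0 : ℝ), ∃ ε₀ > (0 : ℝ), ∀ ε ∈ Set.Ioo (0 : ℝ) 1, ε < ε₀ →
      ∀ x ∈ K, ‖iteratedFDeriv ℝ n (u ε) x‖ ≤ C * ε ^ b

def Negligible {d : ℕ} (u : ℝ → (Fin d → ℝ) → ℂ) : Prop :=
  ∀ K : Set (Fin d → ℝ), IsCompact K → ∀ n : ℕ, ∀ b : ℝ,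
    ∃ C > (0 : ℝ), ∃ ε₀ > (0 : ℝ), ∀ ε ∈ Set.Ioo (0 : ℝ) 1, ε < ε₀ →
      ∀ x ∈ K, ‖iteratedFDeriv ℝ n (u ε) x‖ ≤ C * ε ^ b

/-- The matrix `J = diag(1, …, 1, −1, …, −1)` with `p` entries `+1` followed by `q`
entries `−1`, defining the pseudo-orthogonal group `O(p, q, ℝ)` on `ℝ^{p+q}`. -/
def signatureMatrix (p q : ℕ) : Matrix (Fin (p + q)) (Fin (p + q)) ℝ :=
  Matrix.diagonal fun i => if (i : ℕ) < p then 1 else -1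

namespace PO
variable {p q : ℕ}

local notation "Jm" => signatureMatrix p q

lemma J_mul_J : Jm * Jm = 1 := by
  rw [signatureMatrix, Matrix.diagonal_mul_diagonal]
  have : (fun i : Fin (p+q) => (if (i:ℕ) < p then (1:ℝ) else -1) * if (i:ℕ) < p then (1:ℝ) else -1) = fun _ => (1:ℝ) := by
    funext i; by_cases h : (i:ℕ) < p <;> simp [h]
  rw [this, Matrix.diagonal_one]

lemma J_transpose : (Jm)ᵀ = Jm := Matrix.diagonal_transpose _

variable {A B : Matrix (Fin (p+q)) (Fin (p+q)) ℝ}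

lemma inv_left (h : Aᵀ * Jm * A = Jm) : (Jm * Aᵀ * Jm) * A = 1 := by
  calc (Jm * Aᵀ * Jm) * A = Jm * (Aᵀ * Jm * A) := by simp only [Matrix.mul_assoc]
  _ = 1 := by rw [h, J_mul_J]

lemma inv_right (h : Aᵀ * Jm * A = Jm) : A * (Jm * Aᵀ * Jm) = 1 :=
  mul_eq_one_comm.mp (inv_left h)

lemma mul_mem (hA : Aᵀ * Jm * A = Jm) (hB : Bᵀ * Jm * B = Jm) :
    (A * B)ᵀ * Jm * (A * B) = Jm := by
  rw [Matrix.transpose_mul]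
  calc Bᵀ * Aᵀ * Jm * (A * B) = Bᵀ * (Aᵀ * Jm * A) * B := by simp only [Matrix.mul_assoc]
  _ = Jm := by rw [hA]; exact hB

lemma one_mem : (1 : Matrix (Fin (p+q)) (Fin (p+q)) ℝ)ᵀ * Jm * 1 = Jm := by
  rw [Matrix.transpose_one, Matrix.one_mul, Matrix.mul_one]

lemma inv_mem (h : Aᵀ * Jm * A = Jm) : (Jm * Aᵀ * Jm)ᵀ * Jm * (Jm * Aᵀ * Jm) = Jm := by
  have hAJA : A * Jm * Aᵀ = Jm := by
    have := congrArg (· * Jm) (inv_right h)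
    simp only [Matrix.mul_assoc, J_mul_J, Matrix.mul_one, Matrix.one_mul] at this
    simpa [Matrix.mul_assoc] using this
  have ht : (Jm * Aᵀ * Jm)ᵀ = Jm * A * Jm := by
    simp [Matrix.transpose_mul, J_transpose, Matrix.mul_assoc]
  rw [ht]
  calc Jm * A * Jm * Jm * (Jm * Aᵀ * Jm) = Jm * (A * Jm * Aᵀ) * Jm := by
        simp only [Matrix.mul_assoc, J_mul_J, Matrix.mul_one, Matrix.one_mul]
  _ = Jm := by rw [hAJA, J_mul_J, Matrix.one_mul]

lemma entries_inv {c : ℝ} (h : ∀ i j, |A i j| ≤ c) : ∀ i j, |(Jm * Aᵀ * Jm) i j| ≤ c := by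
  intro i j
  have : (Jm * Aᵀ * Jm) i j = ((if (i:ℕ) < p then (1:ℝ) else -1) * A j i) * (if (j:ℕ) < p then (1:ℝ) else -1) := by
    rw [signatureMatrix, Matrix.mul_diagonal, Matrix.diagonal_mul, Matrix.transpose_apply]
  rw [this, abs_mul, abs_mul]
  have h1 : |(if (i:ℕ) < p then (1:ℝ) else -1)| = 1 := by split <;> simp
  have h2 : |(if (j:ℕ) < p then (1:ℝ) else -1)| = 1 := by split <;> simp
  rw [h1, h2, one_mul, mul_one]; exact h j i

lemma entries_mul {c₁ c₂ : ℝ} (hA : ∀ i j, |A i j| ≤ c₁) (hB : ∀ i j, |B i j| ≤ c₂) :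
    ∀ i j, |(A * B) i j| ≤ (p+q) * (c₁ * c₂) := by
  intro i j
  rw [Matrix.mul_apply]
  calc |∑ k, A i k * B k j| ≤ ∑ k, |A i k * B k j| := Finset.abs_sum_le_sum_abs _ _
  _ ≤ ∑ _k : Fin (p+q), c₁ * c₂ := by
      refine Finset.sum_le_sum fun k _ => ?_
      rw [abs_mul]
      exact mul_le_mul (hA i k) (hB k j) (abs_nonneg _) ((abs_nonneg _).trans (hA i k))
  _ = (p+q) * (c₁ * c₂) := by simp [Finset.sum_const, Finset.card_univ]

end PO

namespace PO2
variable {d : ℕ}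

noncomputable def T (M : Matrix (Fin d) (Fin d) ℝ) : (Fin d → ℝ) →L[ℝ] (Fin d → ℝ) :=
  LinearMap.toContinuousLinearMap M.mulVecLin

lemma T_apply (M : Matrix (Fin d) (Fin d) ℝ) (x : Fin d → ℝ) : T M x = M.mulVec x := rfl

lemma norm_T_le (M : Matrix (Fin d) (Fin d) ℝ) {c : ℝ} (hc : 0 ≤ c)
    (h : ∀ i j, |M i j| ≤ c) : ‖T M‖ ≤ d * c := by
  refine ContinuousLinearMap.opNorm_le_bound _ (by positivity) fun x => ?_
  rw [T_apply]
  refine (pi_norm_le_iff_of_nonneg (by positivity)).2 fun i => ?_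
  rw [Matrix.mulVec, dotProduct]
  calc ‖∑ j, M i j * x j‖ ≤ ∑ j, |M i j * x j| := by
        rw [Real.norm_eq_abs]; exact Finset.abs_sum_le_sum_abs _ _
  _ ≤ ∑ _j : Fin d, c * ‖x‖ := by
      refine Finset.sum_le_sum fun j _ => ?_
      rw [abs_mul]
      exact mul_le_mul (h i j) ((Real.norm_eq_abs _ ▸ norm_le_pi_norm x j)) (abs_nonneg _) hc
  _ = d * c * ‖x‖ := by simp [Finset.sum_const, Finset.card_univ]; ring

lemma norm_mulVec_le (M : Matrix (Fin d) (Fin d) ℝ) {c : ℝ} (hc : 0 ≤ c)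
    (h : ∀ i j, |M i j| ≤ c) (x : Fin d → ℝ) : ‖M.mulVec x‖ ≤ d * c * ‖x‖ := by
  rw [← T_apply]
  exact ((T M).le_opNorm x).trans (mul_le_mul_of_nonneg_right (norm_T_le M hc h) (norm_nonneg x))

variable {f : (Fin d → ℝ) → ℂ} {n : ℕ}

lemma contDiff_compT (hf : ContDiff ℝ (⊤ : ℕ∞) f) (M : Matrix (Fin d) (Fin d) ℝ) :
    ContDiff ℝ (⊤ : ℕ∞) fun y => f (M.mulVec y) := hf.comp (T M).contDiff

lemma contDiff_g (hf : ContDiff ℝ (⊤ : ℕ∞) f) (M : Matrix (Fin d) (Fin d) ℝ) :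
    ContDiff ℝ (⊤ : ℕ∞) fun y => f (M.mulVec y) - f y := (contDiff_compT hf M).sub hf

lemma iteratedFDeriv_compT (hf : ContDiff ℝ (⊤ : ℕ∞) f) (M : Matrix (Fin d) (Fin d) ℝ)
    (x : Fin d → ℝ) :
    iteratedFDeriv ℝ n (fun y => f (M.mulVec y)) x =
      (iteratedFDeriv ℝ n f (M.mulVec x)).compContinuousLinearMap (fun _ => T M) :=
  (T M).iteratedFDeriv_comp_right hf x ((by exact_mod_cast le_top))

lemma iteratedFDeriv_g (hf : ContDiff ℝ (⊤ : ℕ∞) f) (M : Matrix (Fin d) (Fin d) ℝ)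
    (x : Fin d → ℝ) :
    iteratedFDeriv ℝ n (fun y => f (M.mulVec y) - f y) x =
      (iteratedFDeriv ℝ n f (M.mulVec x)).compContinuousLinearMap (fun _ => T M)
        - iteratedFDeriv ℝ n f x := by
  have h1 : (fun y => f (M.mulVec y) - f y)
      = (fun z => f (M.mulVec z)) + (-f) := by
    funext y; simp [sub_eq_add_neg]
  have hneg : ContDiff ℝ ((n : ℕ∞)) (-f) := (hf.neg).of_le (by exact_mod_cast le_top)
  rw [h1, iteratedFDeriv_add_apply ((contDiff_compT hf M).of_le (by exact_mod_cast le_top)).contDiffAt hneg.contDiffAt,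
      iteratedFDeriv_neg_apply, iteratedFDeriv_compT hf M x, sub_eq_add_neg]

lemma eval_g (hf : ContDiff ℝ (⊤ : ℕ∞) f) (M : Matrix (Fin d) (Fin d) ℝ) (x : Fin d → ℝ)
    (v : Fin n → (Fin d → ℝ)) :
    (iteratedFDeriv ℝ n (fun y => f (M.mulVec y) - f y) x) v =
      (iteratedFDeriv ℝ n f (M.mulVec x)) (fun i => M.mulVec (v i))
        - (iteratedFDeriv ℝ n f x) v := by
  rw [iteratedFDeriv_g hf M x, ContinuousMultilinearMap.sub_apply,
    ContinuousMultilinearMap.compContinuousLinearMap_apply]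
  rfl

lemma norm_g_mul_le (hf : ContDiff ℝ (⊤ : ℕ∞) f) (M N : Matrix (Fin d) (Fin d) ℝ) (x : Fin d → ℝ) :
    ‖iteratedFDeriv ℝ n (fun y => f ((M * N).mulVec y) - f y) x‖ ≤
      ‖T N‖ ^ n * ‖iteratedFDeriv ℝ n (fun y => f (M.mulVec y) - f y) (N.mulVec x)‖
        + ‖iteratedFDeriv ℝ n (fun y => f (N.mulVec y) - f y) x‖ := by
  have hgM : ContDiff ℝ (⊤ : ℕ∞) fun y => f (M.mulVec y) - f y := contDiff_g hf M
  have h1 : (fun y => f ((M * N).mulVec y) - f y)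
      = fun y => ((fun z => f (M.mulVec z) - f z) ∘ (T N)) y
          + (fun z => f (N.mulVec z) - f z) y := by
    funext y
    simp only [Function.comp_apply, T_apply, Matrix.mulVec_mulVec]
    ring
  rw [h1, iteratedFDeriv_add_apply' ((hgM.comp (T N).contDiff).of_le (by exact_mod_cast le_top)).contDiffAt
      ((contDiff_g hf N).of_le (by exact_mod_cast le_top)).contDiffAt]
  refine (norm_add_le _ _).trans (add_le_add ?_ le_rfl)
  rw [(T N).iteratedFDeriv_comp_right hgM x ((by exact_mod_cast le_top))]
  refine (ContinuousMultilinearMap.norm_compContinuousLinearMap_le _ _).trans ?_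
  rw [Finset.prod_const, Finset.card_univ]
  simp [T_apply, mul_comm]

lemma cont_eval (hf : ContDiff ℝ (⊤ : ℕ∞) f) (x : Fin d → ℝ) (v : Fin n → (Fin d → ℝ)) :
    Continuous fun M : Matrix (Fin d) (Fin d) ℝ =>
      (iteratedFDeriv ℝ n (fun y => f (M.mulVec y) - f y) x) v := by
  have heq : (fun M : Matrix (Fin d) (Fin d) ℝ =>
      (iteratedFDeriv ℝ n (fun y => f (M.mulVec y) - f y) x) v)
      = fun M => (iteratedFDeriv ℝ n f (M.mulVec x)) (fun i => M.mulVec (v i))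
          - (iteratedFDeriv ℝ n f x) v := by
    funext M; rw [eval_g hf M x v]
  rw [heq]
  have c1 : Continuous fun M : Matrix (Fin d) (Fin d) ℝ => M.mulVec x :=
    continuous_id.matrix_mulVec continuous_const
  have c2 : Continuous fun M : Matrix (Fin d) (Fin d) ℝ => iteratedFDeriv ℝ n f (M.mulVec x) :=
    (hf.continuous_iteratedFDeriv (by exact_mod_cast le_top)).comp c1
  have c3 : Continuous fun M : Matrix (Fin d) (Fin d) ℝ => fun i : Fin n => M.mulVec (v i) :=
    continuous_pi fun i => continuous_id.matrix_mulVec continuous_const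
  exact ((continuous_eval.comp (c2.prodMk c3))).sub continuous_const

end PO2

set_option maxHeartbeats 2000000 in
/-- A Colombeau generalized function invariant under all classical pseudo-orthogonal
transformations of signature `(p, q)` is invariant under all generalized (uniformly
bounded) pseudo-orthogonal transformations. -/
theorem invariance_generalized_pseudo_orthogonal (p q : ℕ) (hp : 1 ≤ p) (hq : 1 ≤ q)
    (f : ℝ → (Fin (p + q) → ℝ) → ℂ)
    (hf_smooth : ∀ ε ∈ Set.Ioo (0 : ℝ) 1, ContDiff ℝ (⊤ : ℕ∞) (f ε))
    (hf_mod : Moderate f)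
    (hf_inv : ∀ A : Matrix (Fin (p + q)) (Fin (p + q)) ℝ,
      A.transpose * signatureMatrix p q * A = signatureMatrix p q →
      Negligible (fun ε x => f ε (A.mulVec x) - f ε x)) :
    ∀ A : ℝ → Matrix (Fin (p + q)) (Fin (p + q)) ℝ,
      (∀ ε ∈ Set.Ioo (0 : ℝ) 1,
        (A ε).transpose * signatureMatrix p q * A ε = signatureMatrix p q) →
      (∃ C > (0 : ℝ), ∀ ε ∈ Set.Ioo (0 : ℝ) 1, ∀ i j, |A ε i j| ≤ C) →
      Negligible (fun ε x => f ε ((A ε).mulVec x) - f ε x) := by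
  classical
  intro A hA hAbound K hK n b
  obtain ⟨C₀, hC₀pos, hC₀⟩ := hAbound
  obtain ⟨m, hmb⟩ := exists_nat_ge b
  -- radius of K
  obtain ⟨ρ₀, hρ₀⟩ := hK.isBounded.subset_closedBall 0
  set ρ : ℝ := max ρ₀ 0 with hρdef
  have hρ0 : (0:ℝ) ≤ ρ := le_max_right _ _
  have hKρ : ∀ x ∈ K, ‖x‖ ≤ ρ := fun x hx => by
    have := hρ₀ hx
    rw [Metric.mem_closedBall, dist_zero_right] at this
    exact this.trans (le_max_left _ _)
  set J' : Matrix (Fin (p+q)) (Fin (p+q)) ℝ := signatureMatrix p q with hJ'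
  -- radii
  set r : ℕ → ℝ := fun l => ((((p:ℝ)+(q:ℝ))+1)^2) * (((l:ℝ)+1)^2) * (ρ+1) with hrdef
  have hrpos : ∀ l : ℕ, 0 ≤ r l := fun l => by positivity
  -- the group as a topological space
  set S : Set (Matrix (Fin (p+q)) (Fin (p+q)) ℝ) := {M | Mᵀ * J' * M = J'} with hS
  have hScont : Continuous fun M : Matrix (Fin (p+q)) (Fin (p+q)) ℝ => Mᵀ * J' * M :=
    ((continuous_id.matrix_transpose).matrix_mul continuous_const).matrix_mul continuous_id
  have hSclosed : IsClosed S := isClosed_singleton.preimage hScont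
  haveI : LocallyCompactSpace (Matrix (Fin (p+q)) (Fin (p+q)) ℝ) :=
    inferInstanceAs (LocallyCompactSpace (Fin (p+q) → Fin (p+q) → ℝ))
  haveI : LocallyCompactSpace S := hSclosed.locallyCompactSpace
  haveI : BaireSpace S := inferInstance
  haveI : Nonempty S := ⟨⟨1, PO.one_mem⟩⟩
  -- the good sets
  set F : ℕ × ℕ → Set S := fun jl =>
    {M : S | (∀ i j', |M.1 i j'| ≤ (jl.2 : ℝ)) ∧
      (∀ ε ∈ Set.Ioo (0:ℝ) 1, ε < 1/((jl.1:ℝ)+1) →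
        ∀ x ∈ Metric.closedBall (0 : Fin (p+q) → ℝ) (r jl.2), ∀ v : Fin n → (Fin (p+q) → ℝ),
          ‖(iteratedFDeriv ℝ n (fun y => f ε (M.1.mulVec y) - f ε y) x) v‖
              ≤ ε^m * ∏ i, ‖v i‖
          ∧ ‖(iteratedFDeriv ℝ n (fun y => f ε ((J' * M.1ᵀ * J').mulVec y) - f ε y) x) v‖
              ≤ ε^m * ∏ i, ‖v i‖)} with hF
  have hFclosed : ∀ jl, IsClosed (F jl) := by
    intro jl
    have h1 : IsClosed {M : S | ∀ i j', |M.1 i j'| ≤ (jl.2 : ℝ)} := by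
      have : {M : S | ∀ i j', |M.1 i j'| ≤ (jl.2 : ℝ)}
          = ⋂ (i) (j'), {M : S | |M.1 i j'| ≤ (jl.2 : ℝ)} := by
        ext M; simp [Set.mem_iInter]
      rw [this]
      exact isClosed_iInter fun i => isClosed_iInter fun j' =>
        isClosed_le ((continuous_subtype_val.matrix_elem i j').abs) continuous_const
    have h2 : IsClosed {M : S | ∀ ε ∈ Set.Ioo (0:ℝ) 1, ε < 1/((jl.1:ℝ)+1) →
        ∀ x ∈ Metric.closedBall (0 : Fin (p+q) → ℝ) (r jl.2), ∀ v : Fin n → (Fin (p+q) → ℝ),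
          ‖(iteratedFDeriv ℝ n (fun y => f ε (M.1.mulVec y) - f ε y) x) v‖
              ≤ ε^m * ∏ i, ‖v i‖
          ∧ ‖(iteratedFDeriv ℝ n (fun y => f ε ((J' * M.1ᵀ * J').mulVec y) - f ε y) x) v‖
              ≤ ε^m * ∏ i, ‖v i‖} := by
      have : {M : S | ∀ ε ∈ Set.Ioo (0:ℝ) 1, ε < 1/((jl.1:ℝ)+1) →
          ∀ x ∈ Metric.closedBall (0 : Fin (p+q) → ℝ) (r jl.2), ∀ v : Fin n → (Fin (p+q) → ℝ),
            ‖(iteratedFDeriv ℝ n (fun y => f ε (M.1.mulVec y) - f ε y) x) v‖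
                ≤ ε^m * ∏ i, ‖v i‖
            ∧ ‖(iteratedFDeriv ℝ n (fun y => f ε ((J' * M.1ᵀ * J').mulVec y) - f ε y) x) v‖
                ≤ ε^m * ∏ i, ‖v i‖}
          = ⋂ (ε : ℝ) (hε : ε ∈ Set.Ioo (0:ℝ) 1) (_ : ε < 1/((jl.1:ℝ)+1))
              (x : Fin (p+q) → ℝ) (_ : x ∈ Metric.closedBall (0 : Fin (p+q) → ℝ) (r jl.2))
              (v : Fin n → (Fin (p+q) → ℝ)),
              ({M : S | ‖(iteratedFDeriv ℝ n (fun y => f ε (M.1.mulVec y) - f ε y) x) v‖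
                  ≤ ε^m * ∏ i, ‖v i‖}
               ∩ {M : S | ‖(iteratedFDeriv ℝ n (fun y => f ε ((J' * M.1ᵀ * J').mulVec y) - f ε y) x) v‖
                  ≤ ε^m * ∏ i, ‖v i‖}) := by
        ext M
        simp only [Set.mem_setOf_eq, Set.mem_iInter, Set.mem_inter_iff]
      rw [this]
      refine isClosed_iInter fun ε => isClosed_iInter fun hε => isClosed_iInter fun _ =>
        isClosed_iInter fun x => isClosed_iInter fun _ => isClosed_iInter fun v =>
        IsClosed.inter ?_ ?_
      · have c1 : Continuous fun M : S =>
            (iteratedFDeriv ℝ n (fun y => f ε (M.1.mulVec y) - f ε y) x) v :=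
          (PO2.cont_eval (hf_smooth ε hε) x v).comp continuous_subtype_val
        exact isClosed_le c1.norm continuous_const
      · have hcont : Continuous fun M : S => J' * M.1ᵀ * J' :=
          (continuous_const.matrix_mul (continuous_subtype_val.matrix_transpose)).matrix_mul
            continuous_const
        have c2 : Continuous fun M : S =>
            (iteratedFDeriv ℝ n (fun y => f ε ((J' * M.1ᵀ * J').mulVec y) - f ε y) x) v :=
          (PO2.cont_eval (hf_smooth ε hε) x v).comp hcont
        exact isClosed_le c2.norm continuous_const
    have : F jl = {M : S | ∀ i j', |M.1 i j'| ≤ (jl.2 : ℝ)} ∩ _ := rfl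
    rw [this]
    exact h1.inter h2

  -- Every element of S lies in some F (j,l)
  have hFcover : ⋃ jl : ℕ × ℕ, F jl = Set.univ := by
    rw [Set.eq_univ_iff_forall]
    intro M
    rw [Set.mem_iUnion]
    obtain ⟨l, hl⟩ : ∃ l : ℕ, ∀ i j', |M.1 i j'| ≤ (l:ℝ) := by
      refine ⟨⌈∑ i, ∑ j', |M.1 i j'|⌉₊, fun i j' => ?_⟩
      have h1 : |M.1 i j'| ≤ ∑ j'', |M.1 i j''| :=
        Finset.single_le_sum (f := fun j'' => |M.1 i j''|) (fun _ _ => abs_nonneg _)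
          (Finset.mem_univ j')
      have h2 : ∑ j'', |M.1 i j''| ≤ ∑ i', ∑ j'', |M.1 i' j''| :=
        Finset.single_le_sum (f := fun i' => ∑ j'', |M.1 i' j''|)
          (fun _ _ => Finset.sum_nonneg fun _ _ => abs_nonneg _) (Finset.mem_univ i)
      exact (h1.trans h2).trans (Nat.le_ceil _)
    have hMinv : (J' * M.1ᵀ * J')ᵀ * J' * (J' * M.1ᵀ * J') = J' := PO.inv_mem M.2
    obtain ⟨C₁, hC₁, ε₁, hε₁, hB₁⟩ := hf_inv M.1 M.2 (Metric.closedBall 0 (r l))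
      (isCompact_closedBall _ _) n ((m:ℝ)+1)
    obtain ⟨C₂, hC₂, ε₂, hε₂, hB₂⟩ := hf_inv _ hMinv (Metric.closedBall 0 (r l))
      (isCompact_closedBall _ _) n ((m:ℝ)+1)
    obtain ⟨j, hj⟩ := exists_nat_gt (max (max (1/ε₁) (1/ε₂)) (max C₁ C₂))
    have hj1 : 1/ε₁ < (j:ℝ)+1 := ((le_max_left _ _).trans (le_max_left _ _)).trans_lt
      (hj.trans (lt_add_one _))
    have hj2 : 1/ε₂ < (j:ℝ)+1 := ((le_max_right _ _).trans (le_max_left _ _)).trans_lt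
      (hj.trans (lt_add_one _))
    have hj3 : C₁ < (j:ℝ)+1 := ((le_max_left _ _).trans (le_max_right _ _)).trans_lt
      (hj.trans (lt_add_one _))
    have hj4 : C₂ < (j:ℝ)+1 := ((le_max_right _ _).trans (le_max_right _ _)).trans_lt
      (hj.trans (lt_add_one _))
    have hjpos : (0:ℝ) < (j:ℝ)+1 := by positivity
    refine ⟨(j, l), hl, ?_⟩
    intro ε hε hεj x hx v
    have hεpos : (0:ℝ) < ε := hε.1
    have hεe : ε ^ ((m:ℝ)+1) = ε^m * ε := by
      rw [Real.rpow_add hεpos, Real.rpow_one, Real.rpow_natCast]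
    have hεmnn : (0:ℝ) ≤ ε^m := pow_nonneg hεpos.le m
    have hprod : (0:ℝ) ≤ ∏ i, ‖v i‖ := Finset.prod_nonneg fun _ _ => norm_nonneg _
    constructor
    · have hlt₁ : ε < ε₁ := by
        have : 1/((j:ℝ)+1) < ε₁ := by
          rw [div_lt_iff₀ hjpos]
          rw [div_lt_iff₀ hε₁] at hj1
          nlinarith
        exact hεj.trans this
      have hb := hB₁ ε hε hlt₁ x hx
      have hb' : ‖iteratedFDeriv ℝ n (fun y => f ε (M.1.mulVec y) - f ε y) x‖
          ≤ C₁ * ε ^ ((m:ℝ)+1) := hb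
      have hC₁ε : C₁ * ε ^ ((m:ℝ)+1) ≤ ε^m := by
        rw [hεe]
        have : C₁ * ε ≤ 1 := by
          have h' : ε * ((j:ℝ)+1) < 1 := (lt_div_iff₀ hjpos).1 hεj
          nlinarith [mul_lt_mul_of_pos_right hj3 hεpos]
        nlinarith
      calc ‖(iteratedFDeriv ℝ n (fun y => f ε (M.1.mulVec y) - f ε y) x) v‖
          ≤ ‖iteratedFDeriv ℝ n (fun y => f ε (M.1.mulVec y) - f ε y) x‖ * ∏ i, ‖v i‖ :=
            ContinuousMultilinearMap.le_opNorm _ _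
        _ ≤ ε^m * ∏ i, ‖v i‖ :=
            mul_le_mul_of_nonneg_right (hb'.trans hC₁ε) hprod
    · have hlt₂ : ε < ε₂ := by
        have : 1/((j:ℝ)+1) < ε₂ := by
          rw [div_lt_iff₀ hjpos]
          rw [div_lt_iff₀ hε₂] at hj2
          nlinarith
        exact hεj.trans this
      have hb := hB₂ ε hε hlt₂ x hx
      have hb' : ‖iteratedFDeriv ℝ n (fun y => f ε ((J' * M.1ᵀ * J').mulVec y) - f ε y) x‖
          ≤ C₂ * ε ^ ((m:ℝ)+1) := hb
      have hC₂ε : C₂ * ε ^ ((m:ℝ)+1) ≤ ε^m := by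
        rw [hεe]
        have : C₂ * ε ≤ 1 := by
          have h' : ε * ((j:ℝ)+1) < 1 := (lt_div_iff₀ hjpos).1 hεj
          nlinarith [mul_lt_mul_of_pos_right hj4 hεpos]
        nlinarith
      calc ‖(iteratedFDeriv ℝ n (fun y => f ε ((J' * M.1ᵀ * J').mulVec y) - f ε y) x) v‖
          ≤ ‖iteratedFDeriv ℝ n (fun y => f ε ((J' * M.1ᵀ * J').mulVec y) - f ε y) x‖
              * ∏ i, ‖v i‖ := ContinuousMultilinearMap.le_opNorm _ _
        _ ≤ ε^m * ∏ i, ‖v i‖ := mul_le_mul_of_nonneg_right (hb'.trans hC₂ε) hprod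
  -- Baire category
  obtain ⟨⟨j₀, l₀⟩, u₀, hu₀U⟩ : ∃ jl : ℕ × ℕ, ∃ u₀ : S, u₀ ∈ interior (F jl) := by
    obtain ⟨jl, hjl⟩ := nonempty_interior_of_iUnion_of_closed hFclosed hFcover
    exact ⟨jl, hjl⟩
  have hUsub : interior (F (j₀, l₀)) ⊆ F (j₀, l₀) := interior_subset
  -- the compact set of bounded group elements
  have hΩcompact : IsCompact {a : S | ∀ i j', |a.1 i j'| ≤ C₀} := by
    rw [Subtype.isCompact_iff]
    have himg : Subtype.val '' {a : S | ∀ i j', |a.1 i j'| ≤ C₀}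
        = {N : Matrix (Fin (p+q)) (Fin (p+q)) ℝ | ∀ i j', |N i j'| ≤ C₀} ∩ S := by
      ext N
      constructor
      · rintro ⟨a, ha, rfl⟩; exact ⟨ha, a.2⟩
      · rintro ⟨h1, h2⟩; exact ⟨⟨N, h2⟩, h1, rfl⟩
    rw [himg]
    refine IsCompact.inter_right ?_ hSclosed
    have hpi : {N : Matrix (Fin (p+q)) (Fin (p+q)) ℝ | ∀ i j', |N i j'| ≤ C₀}
        = Set.pi Set.univ (fun _ : Fin (p+q) =>
            Set.pi Set.univ fun _ : Fin (p+q) => Set.Icc (-C₀) C₀) := by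
      ext N
      refine ⟨fun h => ?_, fun h => ?_⟩
      · exact Set.mem_univ_pi.2 fun i => Set.mem_univ_pi.2 fun j' =>
          Set.mem_Icc.2 (abs_le.1 (h i j'))
      · intro i j'
        exact abs_le.2 (Set.mem_Icc.1 (Set.mem_univ_pi.1 (Set.mem_univ_pi.1 h i) j'))
    rw [hpi]
    exact isCompact_univ_pi fun i => isCompact_univ_pi fun j' => isCompact_Icc
  -- the open cover by translates
  have hmulcont : ∀ a : S, Continuous fun B : S =>
      (⟨a.1 * B.1, PO.mul_mem a.2 B.2⟩ : S) :=
    fun a => Continuous.subtype_mk (continuous_const.matrix_mul continuous_subtype_val) _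
  have hcovsub : {a : S | ∀ i j', |a.1 i j'| ≤ C₀} ⊆
      ⋃ a : S, (fun B : S => (⟨(J' * a.1ᵀ * J') * B.1,
          PO.mul_mem (PO.inv_mem a.2) B.2⟩ : S)) ⁻¹'
        ((fun B : S => (⟨u₀.1 * B.1, PO.mul_mem u₀.2 B.2⟩ : S)) ⁻¹'
          (interior (F (j₀, l₀)))) := by
    intro a _
    rw [Set.mem_iUnion]
    refine ⟨a, ?_⟩
    show (⟨u₀.1 * ((J' * a.1ᵀ * J') * a.1), _⟩ : S) ∈ interior (F (j₀, l₀))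
    have : (⟨u₀.1 * ((J' * a.1ᵀ * J') * a.1), PO.mul_mem u₀.2
        (PO.mul_mem (PO.inv_mem a.2) a.2)⟩ : S) = u₀ := by
      apply Subtype.ext
      show u₀.1 * ((J' * a.1ᵀ * J') * a.1) = u₀.1
      rw [PO.inv_left a.2, Matrix.mul_one]
    rw [this]
    exact hu₀U
  obtain ⟨t, ht⟩ := hΩcompact.elim_finite_subcover _
    (fun a : S => (((hmulcont u₀).isOpen_preimage _ isOpen_interior).preimage
      (Continuous.subtype_mk
        (continuous_const.matrix_mul continuous_subtype_val) _))) hcovsub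
  -- negligibility constants for the finitely many classical transformations
  have hnegall : ∀ a : S, ∃ C > (0:ℝ), ∃ e > (0:ℝ), ∀ ε ∈ Set.Ioo (0:ℝ) 1, ε < e →
      ∀ y ∈ Metric.closedBall (0 : Fin (p+q) → ℝ) (r l₀),
        ‖iteratedFDeriv ℝ n (fun z => f ε (a.1.mulVec z) - f ε z) y‖ ≤ C * ε ^ b := by
    intro a
    obtain ⟨C, hC, e, he, hb'⟩ := hf_inv a.1 a.2 (Metric.closedBall 0 (r l₀))
      (isCompact_closedBall _ _) n b
    exact ⟨C, hC, e, he, fun ε hε hlt y hy => hb' ε hε hlt y hy⟩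
  choose Cf hCf εf hεf hNf using hnegall
  have hhalf : (1/2 : ℝ) ∈ Set.Ioo (0:ℝ) 1 := by norm_num
  have ha₂ : (⟨A (1/2), hA _ hhalf⟩ : S) ∈ {a : S | ∀ i j', |a.1 i j'| ≤ C₀} :=
    fun i j' => hC₀ _ hhalf i j'
  obtain ⟨a', ha't, _⟩ := Set.mem_iUnion₂.1 (ht ha₂)
  have htne : t.Nonempty := ⟨a', ha't⟩
  have hεminpos : 0 < t.inf' htne εf := by
    rw [Finset.lt_inf'_iff]
    exact fun a _ => hεf a
  have hCmaxpos : 0 < t.sup' htne Cf := (hCf a').trans_le (Finset.le_sup' Cf ha't)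
  set c : ℝ := ((p:ℝ) + (q:ℝ)) with hcdef
  have hc0 : (0:ℝ) ≤ c := by rw [hcdef]; positivity
  set R₁ : ℝ := c * (l₀:ℝ) + 1 with hR₁def
  set R₂ : ℝ := c * (c * ((l₀:ℝ) * (l₀:ℝ))) + 1 with hR₂def
  have hR₁pos : (0:ℝ) < R₁ := by positivity
  have hR₂pos : (0:ℝ) < R₂ := by positivity
  have hl₀0 : (0:ℝ) ≤ (l₀:ℝ) := Nat.cast_nonneg _
  have hrl₀ : r l₀ = ((c+1)^2) * (((l₀:ℝ)+1)^2) * (ρ+1) := by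
    simp only [hrdef, hcdef]
  refine ⟨R₂^n * t.sup' htne Cf + (R₁^n + 1), ?_, min (t.inf' htne εf) (1/((j₀:ℝ)+1)), ?_, ?_⟩
  · have h1 : (0:ℝ) < R₂^n * t.sup' htne Cf := mul_pos (pow_pos hR₂pos n) hCmaxpos
    have h2 : (0:ℝ) < R₁^n + 1 := by positivity
    linarith
  · exact lt_min hεminpos (by positivity)
  intro ε hε hεlt x hx
  have hεpos : (0:ℝ) < ε := hε.1
  have hεj₀ : ε < 1/((j₀:ℝ)+1) := hεlt.trans_le (min_le_right _ _)
  have hεinf : ε < t.inf' htne εf := hεlt.trans_le (min_le_left _ _)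
  have hfε := hf_smooth ε hε
  -- pick a patch of the cover containing A ε
  have hAεΩ : (⟨A ε, hA ε hε⟩ : S) ∈ {a : S | ∀ i j', |a.1 i j'| ≤ C₀} :=
    fun i j' => hC₀ ε hε i j'
  obtain ⟨a, hat, hacov⟩ := Set.mem_iUnion₂.1 (ht hAεΩ)
  -- the factorization A ε = a * w with w = u₀⁻¹ * (u₀ * w) and u₀ * w ∈ U
  have hwmem : ((J' * a.1ᵀ * J') * A ε)ᵀ * J' * ((J' * a.1ᵀ * J') * A ε) = J' :=
    PO.mul_mem (PO.inv_mem a.2) (hA ε hε)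
  have huU : (⟨u₀.1 * ((J' * a.1ᵀ * J') * A ε), PO.mul_mem u₀.2 hwmem⟩ : S)
      ∈ interior (F (j₀, l₀)) := hacov
  have huF := hUsub huU
  have hu₀F := hUsub hu₀U
  -- entry bounds
  have hu₀ent : ∀ i j', |u₀.1 i j'| ≤ (l₀:ℝ) := hu₀F.1
  have huent : ∀ i j', |(u₀.1 * ((J' * a.1ᵀ * J') * A ε)) i j'| ≤ (l₀:ℝ) := huF.1
  have hu₀inv_ent : ∀ i j', |(J' * u₀.1ᵀ * J') i j'| ≤ (l₀:ℝ) := PO.entries_inv hu₀ent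
  have hwdef : (J' * a.1ᵀ * J') * A ε
      = (J' * u₀.1ᵀ * J') * (u₀.1 * ((J' * a.1ᵀ * J') * A ε)) := by
    rw [← Matrix.mul_assoc, PO.inv_left u₀.2, Matrix.one_mul]
  have hwent : ∀ i j', |((J' * a.1ᵀ * J') * A ε) i j'| ≤ c * ((l₀:ℝ) * (l₀:ℝ)) := by
    rw [hwdef, hcdef]
    exact PO.entries_mul hu₀inv_ent huent
  have hAεdef : A ε = a.1 * ((J' * a.1ᵀ * J') * A ε) := by
    rw [← Matrix.mul_assoc, PO.inv_right a.2, Matrix.one_mul]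
  -- operator norm bounds
  have hclnn : (0:ℝ) ≤ c * ((l₀:ℝ) * (l₀:ℝ)) := by
    rw [hcdef]; positivity
  have hTw : ‖PO2.T ((J' * a.1ᵀ * J') * A ε)‖ ≤ R₂ := by
    have h := PO2.norm_T_le ((J' * a.1ᵀ * J') * A ε) hclnn hwent
    rw [hR₂def, hcdef]
    rw [hcdef] at h
    push_cast at h
    linarith
  have hTu : ‖PO2.T (u₀.1 * ((J' * a.1ᵀ * J') * A ε))‖ ≤ R₁ := by
    have h := PO2.norm_T_le (u₀.1 * ((J' * a.1ᵀ * J') * A ε)) hl₀0 huent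
    rw [hR₁def, hcdef]
    push_cast at h
    linarith
  -- points in the ball of radius r l₀
  have hxnorm : ‖x‖ ≤ ρ := hKρ x hx
  have hbig : ∀ s : ℝ, 0 ≤ s → s ≤ (c+1)*(c+1)*(((l₀:ℝ)+1)*((l₀:ℝ)+1)) → s * ρ ≤ r l₀ := by
    intro s hs hle
    rw [hrl₀]
    have hX : (0:ℝ) ≤ (c+1)*(c+1)*(((l₀:ℝ)+1)*((l₀:ℝ)+1)) := by
      have := hc0; positivity
    have h1 : s * ρ ≤ ((c+1)*(c+1)*(((l₀:ℝ)+1)*((l₀:ℝ)+1))) * ρ :=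
      mul_le_mul_of_nonneg_right hle hρ0
    nlinarith
  have hone : (1:ℝ) ≤ (c+1)*(c+1)*(((l₀:ℝ)+1)*((l₀:ℝ)+1)) := by nlinarith
  have hxball : x ∈ Metric.closedBall (0 : Fin (p+q) → ℝ) (r l₀) := by
    rw [Metric.mem_closedBall, dist_zero_right]
    have := hbig 1 zero_le_one hone
    linarith
  have huxball : (u₀.1 * ((J' * a.1ᵀ * J') * A ε)).mulVec x
      ∈ Metric.closedBall (0 : Fin (p+q) → ℝ) (r l₀) := by
    rw [Metric.mem_closedBall, dist_zero_right]
    have h := PO2.norm_mulVec_le _ hl₀0 huent x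
    push_cast at h
    have h2 : ((p:ℝ)+(q:ℝ)) * (l₀:ℝ) * ‖x‖ ≤ (c * (l₀:ℝ)) * ρ := by
      rw [hcdef]
      have hnn : (0:ℝ) ≤ ((p:ℝ)+(q:ℝ)) * (l₀:ℝ) := by positivity
      nlinarith [norm_nonneg x]
    have h3 : c * (l₀:ℝ) ≤ (c+1)*(c+1)*(((l₀:ℝ)+1)*((l₀:ℝ)+1)) := by nlinarith
    have := hbig (c * (l₀:ℝ)) (by rw [hcdef]; positivity) h3
    linarith
  have hwxball : ((J' * a.1ᵀ * J') * A ε).mulVec x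
      ∈ Metric.closedBall (0 : Fin (p+q) → ℝ) (r l₀) := by
    rw [Metric.mem_closedBall, dist_zero_right]
    have h := PO2.norm_mulVec_le _ hclnn hwent x
    push_cast at h
    rw [hcdef] at h
    have h2 : ((p:ℝ)+(q:ℝ)) * (((p:ℝ)+(q:ℝ)) * ((l₀:ℝ) * (l₀:ℝ))) * ‖x‖
        ≤ (c * (c * ((l₀:ℝ) * (l₀:ℝ)))) * ρ := by
      rw [hcdef]
      have hnn : (0:ℝ) ≤ ((p:ℝ)+(q:ℝ)) * (((p:ℝ)+(q:ℝ)) * ((l₀:ℝ) * (l₀:ℝ))) := by positivity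
      nlinarith [norm_nonneg x]
    have h3 : c * (c * ((l₀:ℝ) * (l₀:ℝ))) ≤ (c+1)*(c+1)*(((l₀:ℝ)+1)*((l₀:ℝ)+1)) := by nlinarith
    have := hbig (c * (c * ((l₀:ℝ) * (l₀:ℝ)))) (by rw [hcdef]; positivity) h3
    linarith
  -- ε-power bounds
  have hεmnn : (0:ℝ) ≤ ε^m := pow_nonneg hεpos.le m
  have hεb : ε^m ≤ ε^b := by
    have := Real.rpow_le_rpow_of_exponent_ge hεpos hε.2.le hmb
    rwa [Real.rpow_natCast] at this
  have hεbpos : (0:ℝ) < ε^b := Real.rpow_pos_of_pos hεpos b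
  -- good bounds
  have hgu : ‖iteratedFDeriv ℝ n
      (fun y => f ε ((u₀.1 * ((J' * a.1ᵀ * J') * A ε)).mulVec y) - f ε y) x‖ ≤ ε^m := by
    refine (ContinuousMultilinearMap.opNorm_le_iff hεmnn).2 fun v => ?_
    exact (huF.2 ε hε hεj₀ x hxball v).1
  have hgu₀inv : ‖iteratedFDeriv ℝ n
      (fun y => f ε ((J' * u₀.1ᵀ * J').mulVec y) - f ε y)
      ((u₀.1 * ((J' * a.1ᵀ * J') * A ε)).mulVec x)‖ ≤ ε^m := by
    refine (ContinuousMultilinearMap.opNorm_le_iff hεmnn).2 fun v => ?_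
    exact (hu₀F.2 ε hε hεj₀ _ huxball v).2
  have hga : ‖iteratedFDeriv ℝ n (fun z => f ε (a.1.mulVec z) - f ε z)
      (((J' * a.1ᵀ * J') * A ε).mulVec x)‖ ≤ Cf a * ε^b :=
    hNf a ε hε (hεinf.trans_le (Finset.inf'_le εf hat)) _ hwxball
  -- assemble
  show ‖iteratedFDeriv ℝ n (fun y => f ε ((A ε).mulVec y) - f ε y) x‖
      ≤ (R₂^n * t.sup' htne Cf + (R₁^n + 1)) * ε ^ b
  have step2 : ‖iteratedFDeriv ℝ n
      (fun y => f ε (((J' * a.1ᵀ * J') * A ε).mulVec y) - f ε y) x‖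
      ≤ R₁^n * ε^m + ε^m := by
    have h2 := PO2.norm_g_mul_le (n := n) hfε (J' * u₀.1ᵀ * J')
      (u₀.1 * ((J' * a.1ᵀ * J') * A ε)) x
    rw [← hwdef] at h2
    refine h2.trans (add_le_add ?_ hgu)
    refine mul_le_mul ?_ hgu₀inv (norm_nonneg _) (by positivity)
    exact pow_le_pow_left₀ (norm_nonneg _) hTu n
  have step1 : ‖iteratedFDeriv ℝ n (fun y => f ε ((A ε).mulVec y) - f ε y) x‖
      ≤ ‖PO2.T ((J' * a.1ᵀ * J') * A ε)‖^n
          * ‖iteratedFDeriv ℝ n (fun z => f ε (a.1.mulVec z) - f ε z)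
              (((J' * a.1ᵀ * J') * A ε).mulVec x)‖
        + ‖iteratedFDeriv ℝ n
            (fun y => f ε (((J' * a.1ᵀ * J') * A ε).mulVec y) - f ε y) x‖ := by
    have h1 := PO2.norm_g_mul_le (n := n) hfε a.1 ((J' * a.1ᵀ * J') * A ε) x
    rw [← hAεdef] at h1
    exact h1
  have t1 : ‖PO2.T ((J' * a.1ᵀ * J') * A ε)‖^n
        * ‖iteratedFDeriv ℝ n (fun z => f ε (a.1.mulVec z) - f ε z)
            (((J' * a.1ᵀ * J') * A ε).mulVec x)‖
      ≤ R₂^n * (t.sup' htne Cf * ε^b) := by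
    refine mul_le_mul (pow_le_pow_left₀ (norm_nonneg _) hTw n)
      (hga.trans (mul_le_mul_of_nonneg_right (Finset.le_sup' Cf hat) hεbpos.le))
      (norm_nonneg _) (by positivity)
  have t2 : ‖iteratedFDeriv ℝ n
        (fun y => f ε (((J' * a.1ᵀ * J') * A ε).mulVec y) - f ε y) x‖
      ≤ R₁^n * ε^b + ε^b := by
    refine step2.trans (add_le_add ?_ hεb)
    exact mul_le_mul_of_nonneg_left hεb (by positivity)
  calc ‖iteratedFDeriv ℝ n (fun y => f ε ((A ε).mulVec y) - f ε y) x‖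
      ≤ _ + _ := step1
    _ ≤ R₂^n * (t.sup' htne Cf * ε^b) + (R₁^n * ε^b + ε^b) := add_le_add t1 t2
    _ = (R₂^n * t.sup' htne Cf + (R₁^n + 1)) * ε ^ b := by ring
end

section
/- Let (u_ε)_{ε∈(0,1)} be a moderate net of smooth functions ℝ^d → ℂ. Suppose that for every h ∈ ℝ^d the net (x ↦ u_ε(x + h) − u_ε(x))_ε is negligible. Then the net (x ↦ u_ε(x) − u_ε(0))_ε is negligible; that is, a translation-invariant Colombeau generalized function on ℝ^d is a generalized constant. -/
open Metric Set

section Helpers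

variable {E F : Type*} [NormedAddCommGroup E] [NormedSpace ℝ E]
  [NormedAddCommGroup F] [NormedSpace ℝ F]

/-- Derivative of a translate. -/
lemma fderiv_comp_add_vec {g : E → F} {x h : E} (hg : DifferentiableAt ℝ g (x + h)) :
    fderiv ℝ (fun y => g (y + h)) x = fderiv ℝ g (x + h) := by
  have h1 : HasFDerivAt (fun y : E => y + h) (ContinuousLinearMap.id ℝ E) x :=
    (hasFDerivAt_id x).add_const h
  have h2 := hg.hasFDerivAt.comp x h1
  rw [ContinuousLinearMap.comp_id] at h2
  exact h2.fderiv

/-- Iterated derivative of a translate. -/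
lemma iteratedFDeriv_comp_add_vec {f : E → F} (hf : ContDiff ℝ (⊤ : ℕ∞) f) (h : E) :
    ∀ (m : ℕ) (x : E),
      iteratedFDeriv ℝ m (fun y => f (y + h)) x = iteratedFDeriv ℝ m f (x + h) := by
  intro m
  induction m with
  | zero =>
      intro x; ext v; simp [iteratedFDeriv_zero_apply]
  | succ m ih =>
      intro x
      rw [iteratedFDeriv_succ_eq_comp_left, iteratedFDeriv_succ_eq_comp_left]
      simp only [Function.comp_apply]
      congr 1
      have hIH : iteratedFDeriv ℝ m (fun y => f (y + h))
          = fun z => iteratedFDeriv ℝ m f (z + h) := funext ih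
      rw [hIH]
      exact fderiv_comp_add_vec
        (((hf.iteratedFDeriv_right (m := 1) (i := m) (by exact_mod_cast le_top)).differentiable one_ne_zero).differentiableAt)

lemma iteratedFDeriv_sub_apply₂ {f g : E → F} (hf : ContDiff ℝ (⊤ : ℕ∞) f) (hg : ContDiff ℝ (⊤ : ℕ∞) g)
    (m : ℕ) (x : E) :
    iteratedFDeriv ℝ m (fun y => f y - g y) x
      = iteratedFDeriv ℝ m f x - iteratedFDeriv ℝ m g x := by
  have hng : ContDiff ℝ (⊤ : ℕ∞) (-g) := hg.neg
  calc iteratedFDeriv ℝ m (fun y => f y - g y) x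
      = iteratedFDeriv ℝ m (f + (-g)) x := by
        congr 1; funext y; simp [sub_eq_add_neg]
    _ = iteratedFDeriv ℝ m f x + iteratedFDeriv ℝ m (-g) x :=
        iteratedFDeriv_add_apply (hf.of_le (by exact_mod_cast le_top)).contDiffAt (hng.of_le (by exact_mod_cast le_top)).contDiffAt
    _ = iteratedFDeriv ℝ m f x - iteratedFDeriv ℝ m g x := by
        rw [iteratedFDeriv_neg_apply, ← sub_eq_add_neg]

lemma iteratedFDeriv_transl_diff {f : E → F} (hf : ContDiff ℝ (⊤ : ℕ∞) f) (h : E) (m : ℕ) (x : E) :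
    iteratedFDeriv ℝ m (fun y => f (y + h) - f y) x
      = iteratedFDeriv ℝ m f (x + h) - iteratedFDeriv ℝ m f x := by
  have hfc : ContDiff ℝ (⊤ : ℕ∞) (fun y : E => f (y + h)) :=
    hf.comp (contDiff_id.add contDiff_const)
  rw [iteratedFDeriv_sub_apply₂ hfc hf, iteratedFDeriv_comp_add_vec hf]

lemma norm_single_one_le {d : ℕ} (i : Fin d) : ‖(Pi.single i (1:ℝ) : Fin d → ℝ)‖ ≤ 1 := by
  refine (pi_norm_le_iff_of_nonneg zero_le_one).mpr fun j => ?_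
  rcases eq_or_ne j i with rfl | hji
  · simp
  · simp [Pi.single_apply, hji]

lemma opnorm_le_sum_basis {d : ℕ} (L : (Fin d → ℝ) →L[ℝ] F) :
    ‖L‖ ≤ ∑ i : Fin d, ‖L (Pi.single i 1)‖ := by
  refine L.opNorm_le_bound (Finset.sum_nonneg fun i _ => norm_nonneg _) fun v => ?_
  have hv : v = ∑ i : Fin d, v i • (Pi.single i (1:ℝ) : Fin d → ℝ) := by
    funext j
    rw [Finset.sum_apply]
    simp [Pi.single_apply, Finset.sum_ite_eq]
  calc ‖L v‖ = ‖∑ i : Fin d, v i • L (Pi.single i 1)‖ := by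
        conv_lhs => rw [hv]
        rw [map_sum]
        simp [map_smul]
    _ ≤ ∑ i : Fin d, ‖v i • L (Pi.single i 1)‖ := norm_sum_le _ _
    _ ≤ ∑ i : Fin d, ‖v‖ * ‖L (Pi.single i 1)‖ := by
        refine Finset.sum_le_sum fun i _ => ?_
        rw [norm_smul]
        exact mul_le_mul_of_nonneg_right (norm_le_pi_norm v i) (norm_nonneg _)
    _ = (∑ i : Fin d, ‖L (Pi.single i 1)‖) * ‖v‖ := by
        rw [← Finset.mul_sum, mul_comm]

end Helpers


set_option maxHeartbeats 1000000 in
set_option synthInstance.maxHeartbeats 100000 in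
/-- Key quantitative bound: the derivative of any iterated derivative of `u ε` is negligible
on closed balls. Proved via Baire category on the set of shift vectors. -/
theorem key_fderiv_bound {d : ℕ} (u : ℝ → (Fin d → ℝ) → ℂ)
    (hu_smooth : ∀ ε ∈ Set.Ioo (0 : ℝ) 1, ContDiff ℝ (⊤ : ℕ∞) (u ε))
    (hu_mod : Moderate u)
    (hu_inv : ∀ h : Fin d → ℝ, Negligible (fun ε x => u ε (x + h) - u ε x))
    (m₀ : ℕ) (R : ℝ) (hR : 0 < R) (b : ℝ) :
    ∃ C > (0:ℝ), ∃ ε₀ > (0:ℝ), ∀ ε ∈ Set.Ioo (0:ℝ) 1, ε < ε₀ →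
      ∀ x ∈ Metric.closedBall (0 : Fin d → ℝ) R,
        ‖fderiv ℝ (iteratedFDeriv ℝ m₀ (u ε)) x‖ ≤ C * ε ^ b := by
  obtain ⟨b₂, C₂, hC₂, ε₂, hε₂, hmod⟩ :=
    hu_mod (closedBall (0 : Fin d → ℝ) (R + 1)) (isCompact_closedBall _ _) (m₀ + 2)
  set k : ℕ := max 1 ⌈b - b₂⌉₊ with hkdef
  have hk1 : 1 ≤ k := le_max_left _ _
  have hkb : b - b₂ ≤ (k : ℝ) :=
    le_trans (Nat.le_ceil _) (Nat.cast_le.mpr (le_max_right _ _))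
  set b' : ℝ := b + k with hb'def
  -- the Baire category sets
  set A : ℕ → Set (Fin d → ℝ) := fun j =>
    {h | ∀ ε ∈ Set.Ioo (0:ℝ) 1, ε < 1/(j+1) →
      ∀ x ∈ closedBall (0 : Fin d → ℝ) (R + 2),
        ‖iteratedFDeriv ℝ m₀ (fun y => u ε (y + h) - u ε y) x‖ ≤ ε ^ b'} with hAdef
  have hclosed : ∀ j, IsClosed (A j) := by
    intro j
    have hrepr : A j = ⋂ (ε : ℝ), ⋂ (_ : ε ∈ Set.Ioo (0:ℝ) 1), ⋂ (_ : ε < 1/(j+1)),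
        ⋂ (x : Fin d → ℝ), ⋂ (_ : x ∈ closedBall (0 : Fin d → ℝ) (R + 2)),
        {h | ‖iteratedFDeriv ℝ m₀ (fun y => u ε (y + h) - u ε y) x‖ ≤ ε ^ b'} := by
      ext h
      simp only [hAdef, Set.mem_setOf_eq, Set.mem_iInter]
    rw [hrepr]
    refine isClosed_iInter fun ε => isClosed_iInter fun hε => isClosed_iInter fun _ =>
      isClosed_iInter fun x => isClosed_iInter fun _ => ?_
    have hcont : Continuous fun h : Fin d → ℝ =>
        iteratedFDeriv ℝ m₀ (fun y => u ε (y + h) - u ε y) x := by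
      have hfun : (fun h : Fin d → ℝ => iteratedFDeriv ℝ m₀ (fun y => u ε (y + h) - u ε y) x)
          = fun h => iteratedFDeriv ℝ m₀ (u ε) (x + h) - iteratedFDeriv ℝ m₀ (u ε) x := by
        funext h
        exact iteratedFDeriv_transl_diff (hu_smooth ε hε) h m₀ x
      rw [hfun]
      exact ((ContDiff.continuous_iteratedFDeriv (by exact_mod_cast le_top) (hu_smooth ε hε)).comp
        (continuous_const.add continuous_id)).sub continuous_const
    exact isClosed_le hcont.norm continuous_const
  have hunion : ⋃ j, A j = Set.univ := by
    ext h
    simp only [Set.mem_iUnion, Set.mem_univ, iff_true]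
    obtain ⟨C', hC', ε₀', hε₀', hneg⟩ :=
      hu_inv h (closedBall (0 : Fin d → ℝ) (R + 2)) (isCompact_closedBall _ _) m₀ (b' + 1)
    obtain ⟨j, hj⟩ := exists_nat_one_div_lt (show (0:ℝ) < min ε₀' (1/C') by positivity)
    refine ⟨j, ?_⟩
    intro ε hε hεlt x hx
    have hmin : ε < min ε₀' (1/C') := hεlt.trans hj
    have h1 : ε < ε₀' := hmin.trans_le (min_le_left _ _)
    have h2 : C' * ε ≤ 1 := by
      have := hmin.trans_le (min_le_right _ _)
      rw [lt_div_iff₀ hC'] at this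
      linarith [this]
    have h3 := hneg ε hε h1 x hx
    have h4 : ‖iteratedFDeriv ℝ m₀ (fun y => u ε (y + h) - u ε y) x‖ ≤ C' * ε ^ (b' + 1) := h3
    calc ‖iteratedFDeriv ℝ m₀ (fun y => u ε (y + h) - u ε y) x‖
        ≤ C' * ε ^ (b' + 1) := h4
      _ = (C' * ε) * ε ^ b' := by
          rw [Real.rpow_add hε.1, Real.rpow_one]; ring
      _ ≤ 1 * ε ^ b' := by
          exact mul_le_mul_of_nonneg_right h2 (Real.rpow_pos_of_pos hε.1 _).le
      _ = ε ^ b' := one_mul _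
  obtain ⟨j, hjne⟩ := nonempty_interior_of_iUnion_of_closed hclosed hunion
  obtain ⟨h₀, hh₀⟩ := hjne
  obtain ⟨ρ, hρ, hball⟩ := Metric.isOpen_iff.mp isOpen_interior h₀ hh₀
  set ρ' : ℝ := min ρ 1 with hρ'def
  have hρ'pos : 0 < ρ' := lt_min hρ one_pos
  -- uniform smallness of differences for small shifts
  have key : ∀ s : Fin d → ℝ, ‖s‖ < ρ' → ∀ ε ∈ Set.Ioo (0:ℝ) 1, ε < 1/(j+1) →
      ∀ y : Fin d → ℝ, ‖y‖ ≤ R + 1 →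
      ‖iteratedFDeriv ℝ m₀ (u ε) (y + s) - iteratedFDeriv ℝ m₀ (u ε) y‖ ≤ 2 * ε ^ b' := by
    intro s hs ε hε hεlt y hy
    have hsρ : ‖s‖ < ρ := hs.trans_le (min_le_left _ _)
    have hs1 : ‖s‖ ≤ 1 := hs.le.trans (min_le_right _ _)
    have hmem1 : h₀ ∈ A j := interior_subset hh₀
    have hmem2 : h₀ + s ∈ A j := by
      refine interior_subset (hball ?_)
      rw [Metric.mem_ball, dist_eq_norm, add_sub_cancel_left]
      exact hsρ
    have e1 := hmem2 ε hε hεlt y (by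
      rw [mem_closedBall_zero_iff]; linarith)
    have e2 := hmem1 ε hε hεlt (y + s) (by
      rw [mem_closedBall_zero_iff]
      calc ‖y + s‖ ≤ ‖y‖ + ‖s‖ := norm_add_le _ _
        _ ≤ R + 2 := by linarith)
    rw [iteratedFDeriv_transl_diff (hu_smooth ε hε)] at e1 e2
    have harg : y + (h₀ + s) = (y + s) + h₀ := by abel
    have hidentity : iteratedFDeriv ℝ m₀ (u ε) (y + s) - iteratedFDeriv ℝ m₀ (u ε) y
        = (iteratedFDeriv ℝ m₀ (u ε) (y + (h₀ + s)) - iteratedFDeriv ℝ m₀ (u ε) y)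
          - (iteratedFDeriv ℝ m₀ (u ε) ((y + s) + h₀) - iteratedFDeriv ℝ m₀ (u ε) (y + s)) := by
      rw [harg]; abel
    rw [hidentity]
    calc ‖_ - _‖ ≤ ‖iteratedFDeriv ℝ m₀ (u ε) (y + (h₀ + s)) - iteratedFDeriv ℝ m₀ (u ε) y‖
          + ‖iteratedFDeriv ℝ m₀ (u ε) ((y + s) + h₀) - iteratedFDeriv ℝ m₀ (u ε) (y + s)‖ :=
        norm_sub_le _ _
      _ ≤ 2 * ε ^ b' := by linarith [e1, e2]
  -- conclusion
  refine ⟨(d : ℝ) * (2 + C₂) + 1, by positivity, min (min (1/(j+1)) ρ') ε₂, by positivity, ?_⟩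
  intro ε hε hεlt x hx
  have hεj : ε < 1/(j+1) := hεlt.trans_le ((min_le_left _ _).trans (min_le_left _ _))
  have hερ : ε < ρ' := hεlt.trans_le ((min_le_left _ _).trans (min_le_right _ _))
  have hεε₂ : ε < ε₂ := hεlt.trans_le (min_le_right _ _)
  have hxR : ‖x‖ ≤ R := mem_closedBall_zero_iff.mp hx
  have hsm := hu_smooth ε hε
  have hεpos := hε.1
  have hεbpos : (0:ℝ) < ε ^ b := Real.rpow_pos_of_pos hεpos _
  set t : ℝ := ε ^ ((k:ℕ) : ℝ) with htdef
  have ht0 : 0 < t := Real.rpow_pos_of_pos hεpos _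
  have htε : t ≤ ε := by
    have := Real.rpow_le_rpow_of_exponent_ge hεpos hε.2.le
      (show (1:ℝ) ≤ ((k:ℕ):ℝ) by exact_mod_cast hk1)
    rwa [Real.rpow_one] at this
  have htρ : t < ρ' := htε.trans_lt hερ
  have ht1 : t ≤ 1 := htε.trans hε.2.le
  -- second derivative bound
  have hM2 : ∀ w ∈ closedBall (0 : Fin d → ℝ) (R + 1),
      ‖fderiv ℝ (iteratedFDeriv ℝ (m₀ + 1) (u ε)) w‖ ≤ C₂ * ε ^ b₂ := by
    intro w hw
    rw [fderiv_iteratedFDeriv]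
    simp only [Function.comp_apply, LinearIsometryEquiv.norm_map]
    exact hmod ε hε hεε₂ w hw
  -- Lipschitz bound on fderiv of the m₀-th derivative
  have hLip : ∀ z₁ ∈ closedBall (0 : Fin d → ℝ) (R + 1), ∀ z₂ ∈ closedBall (0 : Fin d → ℝ) (R + 1),
      ‖fderiv ℝ (iteratedFDeriv ℝ m₀ (u ε)) z₁ - fderiv ℝ (iteratedFDeriv ℝ m₀ (u ε)) z₂‖
        ≤ (C₂ * ε ^ b₂) * ‖z₁ - z₂‖ := by
    intro z₁ hz₁ z₂ hz₂
    rw [fderiv_iteratedFDeriv]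
    simp only [Function.comp_apply]
    rw [← LinearIsometryEquiv.map_sub, LinearIsometryEquiv.norm_map]
    refine Convex.norm_image_sub_le_of_norm_fderiv_le
      (fun w _ => ((hsm.iteratedFDeriv_right (m := 1) (i := m₀ + 1) (by exact_mod_cast le_top)).differentiable
        one_ne_zero).differentiableAt)
      hM2 (convex_closedBall _ _) hz₂ hz₁
  -- per-direction bound
  have hdir : ∀ i : Fin d,
      ‖fderiv ℝ (iteratedFDeriv ℝ m₀ (u ε)) x (Pi.single i 1)‖ ≤ (2 + C₂) * ε ^ b := by
    intro i
    set e : Fin d → ℝ := Pi.single i 1 with hedef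
    have he1 : ‖e‖ ≤ 1 := norm_single_one_le i
    set s : Fin d → ℝ := t • e with hsdef
    have hs : ‖s‖ ≤ t := by
      rw [hsdef, norm_smul, Real.norm_eq_abs, abs_of_pos ht0]
      nlinarith [he1, ht0]
    -- difference bound
    have hdiff : ‖iteratedFDeriv ℝ m₀ (u ε) (x + s) - iteratedFDeriv ℝ m₀ (u ε) x‖
        ≤ 2 * ε ^ b' := key s (hs.trans_lt htρ) ε hε hεj x (by linarith)
    -- Taylor bound
    have hGdiff : ∀ z ∈ closedBall x t, DifferentiableAt ℝ (iteratedFDeriv ℝ m₀ (u ε)) z :=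
      fun z _ => ((hsm.iteratedFDeriv_right (m := 1) (i := m₀) (by exact_mod_cast le_top)).differentiable
        one_ne_zero).differentiableAt
    have hsubset : closedBall x t ⊆ closedBall (0 : Fin d → ℝ) (R + 1) := by
      intro z hz
      rw [mem_closedBall_zero_iff]
      have : ‖z - x‖ ≤ t := by rw [← dist_eq_norm]; exact Metric.mem_closedBall.mp hz
      calc ‖z‖ = ‖(z - x) + x‖ := by ring_nf
        _ ≤ ‖z - x‖ + ‖x‖ := norm_add_le _ _
        _ ≤ R + 1 := by linarith
    have hxmem : x ∈ closedBall (0 : Fin d → ℝ) (R + 1) := by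
      rw [mem_closedBall_zero_iff]; linarith
    have htay := Convex.norm_image_sub_le_of_norm_fderiv_le'
      (f := iteratedFDeriv ℝ m₀ (u ε)) (φ := fderiv ℝ (iteratedFDeriv ℝ m₀ (u ε)) x)
      (C := (C₂ * ε ^ b₂) * t) hGdiff
      (fun z hz => by
        have h1 := hLip z (hsubset hz) x hxmem
        have h2 : ‖z - x‖ ≤ t := by rw [← dist_eq_norm]; exact Metric.mem_closedBall.mp hz
        calc ‖fderiv ℝ (iteratedFDeriv ℝ m₀ (u ε)) z - fderiv ℝ (iteratedFDeriv ℝ m₀ (u ε)) x‖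
            ≤ (C₂ * ε ^ b₂) * ‖z - x‖ := h1
          _ ≤ (C₂ * ε ^ b₂) * t := by
              refine mul_le_mul_of_nonneg_left h2 (by positivity))
      (convex_closedBall x t) (mem_closedBall_self ht0.le)
      (show x + s ∈ closedBall x t by
        rw [Metric.mem_closedBall, dist_eq_norm, add_sub_cancel_left]; exact hs)
    rw [add_sub_cancel_left] at htay
    -- combine
    have hval : ‖fderiv ℝ (iteratedFDeriv ℝ m₀ (u ε)) x s‖
        ≤ 2 * ε ^ b' + (C₂ * ε ^ b₂) * t * t := by
      have hrw : fderiv ℝ (iteratedFDeriv ℝ m₀ (u ε)) x s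
          = (iteratedFDeriv ℝ m₀ (u ε) (x + s) - iteratedFDeriv ℝ m₀ (u ε) x)
            - ((iteratedFDeriv ℝ m₀ (u ε) (x + s) - iteratedFDeriv ℝ m₀ (u ε) x)
              - fderiv ℝ (iteratedFDeriv ℝ m₀ (u ε)) x s) := by abel
      rw [hrw]
      have hstep := norm_sub_le
        (iteratedFDeriv ℝ m₀ (u ε) (x + s) - iteratedFDeriv ℝ m₀ (u ε) x)
        ((iteratedFDeriv ℝ m₀ (u ε) (x + s) - iteratedFDeriv ℝ m₀ (u ε) x)
          - fderiv ℝ (iteratedFDeriv ℝ m₀ (u ε)) x s)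
      have htay2 : ‖(iteratedFDeriv ℝ m₀ (u ε) (x + s) - iteratedFDeriv ℝ m₀ (u ε) x)
          - fderiv ℝ (iteratedFDeriv ℝ m₀ (u ε)) x s‖ ≤ (C₂ * ε ^ b₂) * t * t := by
        calc ‖(iteratedFDeriv ℝ m₀ (u ε) (x + s) - iteratedFDeriv ℝ m₀ (u ε) x)
            - fderiv ℝ (iteratedFDeriv ℝ m₀ (u ε)) x s‖
            ≤ ((C₂ * ε ^ b₂) * t) * ‖s‖ := by
              have : iteratedFDeriv ℝ m₀ (u ε) (x + s) - iteratedFDeriv ℝ m₀ (u ε) x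
                  - fderiv ℝ (iteratedFDeriv ℝ m₀ (u ε)) x s
                  = iteratedFDeriv ℝ m₀ (u ε) (x + s) - iteratedFDeriv ℝ m₀ (u ε) x
                  - fderiv ℝ (iteratedFDeriv ℝ m₀ (u ε)) x s := rfl
              exact htay
          _ ≤ (C₂ * ε ^ b₂) * t * t := by
              refine mul_le_mul_of_nonneg_left hs (by positivity)
      linarith [hstep, hdiff, htay2]
    -- exponent bookkeeping
    have hεb' : ε ^ b' = ε ^ b * t := by
      rw [hb'def, htdef, Real.rpow_add hεpos]
    have hεb₂t : ε ^ b₂ * t ≤ ε ^ b := by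
      rw [htdef, ← Real.rpow_add hεpos]
      exact Real.rpow_le_rpow_of_exponent_ge hεpos hε.2.le (by linarith)
    have hsmul : fderiv ℝ (iteratedFDeriv ℝ m₀ (u ε)) x s
        = t • fderiv ℝ (iteratedFDeriv ℝ m₀ (u ε)) x e :=
      (fderiv ℝ (iteratedFDeriv ℝ m₀ (u ε)) x).map_smul t e
    have hns := norm_smul t (fderiv ℝ (iteratedFDeriv ℝ m₀ (u ε)) x e)
    have hnorm : t * ‖fderiv ℝ (iteratedFDeriv ℝ m₀ (u ε)) x e‖
        = ‖fderiv ℝ (iteratedFDeriv ℝ m₀ (u ε)) x s‖ := by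
      rw [hsmul, hns, Real.norm_eq_abs, abs_of_pos ht0]
    have hfinal : t * ‖fderiv ℝ (iteratedFDeriv ℝ m₀ (u ε)) x e‖ ≤ ((2 + C₂) * ε ^ b) * t := by
      rw [hnorm]
      calc ‖fderiv ℝ (iteratedFDeriv ℝ m₀ (u ε)) x s‖
          ≤ 2 * ε ^ b' + (C₂ * ε ^ b₂) * t * t := hval
        _ = 2 * (ε ^ b * t) + C₂ * (ε ^ b₂ * t) * t := by rw [hεb']; ring
        _ ≤ 2 * (ε ^ b * t) + C₂ * (ε ^ b) * t := by
            have := mul_le_mul_of_nonneg_right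
              (mul_le_mul_of_nonneg_left hεb₂t hC₂.le) ht0.le
            linarith [this]
        _ = ((2 + C₂) * ε ^ b) * t := by ring
    have := (mul_le_mul_iff_of_pos_right ht0).mp (by linarith [hfinal] :
      ‖fderiv ℝ (iteratedFDeriv ℝ m₀ (u ε)) x e‖ * t ≤ ((2 + C₂) * ε ^ b) * t)
    exact this
  -- sum over directions
  calc ‖fderiv ℝ (iteratedFDeriv ℝ m₀ (u ε)) x‖
      ≤ ∑ i : Fin d, ‖fderiv ℝ (iteratedFDeriv ℝ m₀ (u ε)) x (Pi.single i 1)‖ :=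
        opnorm_le_sum_basis _
    _ ≤ ∑ _i : Fin d, (2 + C₂) * ε ^ b := Finset.sum_le_sum fun i _ => hdir i
    _ = (d : ℝ) * ((2 + C₂) * ε ^ b) := by
        rw [Finset.sum_const, Finset.card_univ, Fintype.card_fin, nsmul_eq_mul]
    _ ≤ ((d : ℝ) * (2 + C₂) + 1) * ε ^ b := by nlinarith [hεbpos, hC₂]

/-- A translation-invariant Colombeau generalized function on `ℝ^d` is a generalized
constant. -/
theorem translation_invariant_is_constant {d : ℕ}
    (u : ℝ → (Fin d → ℝ) → ℂ)
    (hu_smooth : ∀ ε ∈ Set.Ioo (0 : ℝ) 1, ContDiff ℝ (⊤ : ℕ∞) (u ε))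
    (hu_mod : Moderate u)
    (hu_inv : ∀ h : Fin d → ℝ, Negligible (fun ε x => u ε (x + h) - u ε x)) :
    Negligible (fun ε x => u ε x - u ε 0) := by
  intro K hK n b
  obtain ⟨R, hR, hKR⟩ := hK.isBounded.subset_closedBall_lt 0 0
  cases n with
  | zero =>
    obtain ⟨C, hC, ε₀, hε₀, hbound⟩ := key_fderiv_bound u hu_smooth hu_mod hu_inv 0 R hR b
    refine ⟨R * C + 1, by positivity, ε₀, hε₀, ?_⟩
    intro ε hε hεlt x hx
    have hx' : x ∈ closedBall (0 : Fin d → ℝ) R := hKR hx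
    have hεbpos : (0:ℝ) < ε ^ b := Real.rpow_pos_of_pos hε.1 _
    show ‖iteratedFDeriv ℝ 0 (fun y => u ε y - u ε 0) x‖ ≤ (R * C + 1) * ε ^ b
    rw [norm_iteratedFDeriv_zero]
    -- bound on the first derivative of u ε on the ball
    have hder : ∀ z ∈ closedBall (0 : Fin d → ℝ) R, ‖fderiv ℝ (u ε) z‖ ≤ C * ε ^ b := by
      intro z hz
      have h1 := hbound ε hε hεlt z hz
      have e1 : ‖fderiv ℝ (u ε) z‖ = ‖iteratedFDeriv ℝ (0 + 1) (u ε) z‖ := by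
        rw [← norm_iteratedFDeriv_fderiv, norm_iteratedFDeriv_zero]
      have e2 : ‖iteratedFDeriv ℝ (0 + 1) (u ε) z‖
          = ‖fderiv ℝ (iteratedFDeriv ℝ 0 (u ε)) z‖ := by
        rw [fderiv_iteratedFDeriv]
        simp only [Function.comp_apply, LinearIsometryEquiv.norm_map]
      rw [e1, e2]
      exact h1
    have hmvt := Convex.norm_image_sub_le_of_norm_fderiv_le
      (fun z _ => ((hu_smooth ε hε).differentiable (by simp)).differentiableAt) hder
      (convex_closedBall (0 : Fin d → ℝ) R) (mem_closedBall_self hR.le) hx'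
    have hxnorm : ‖x - 0‖ ≤ R := by
      rw [sub_zero]; exact mem_closedBall_zero_iff.mp hx'
    calc ‖u ε x - u ε 0‖ ≤ (C * ε ^ b) * ‖x - 0‖ := hmvt
      _ ≤ (C * ε ^ b) * R := mul_le_mul_of_nonneg_left hxnorm (by positivity)
      _ = (R * C) * ε ^ b := by ring
      _ ≤ (R * C + 1) * ε ^ b := by nlinarith [hεbpos]
  | succ m₀ =>
    obtain ⟨C, hC, ε₀, hε₀, hbound⟩ := key_fderiv_bound u hu_smooth hu_mod hu_inv m₀ R hR b
    refine ⟨C, hC, ε₀, hε₀, ?_⟩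
    intro ε hε hεlt x hx
    show ‖iteratedFDeriv ℝ (m₀ + 1) (fun y => u ε y - u ε 0) x‖ ≤ C * ε ^ b
    have h1 : iteratedFDeriv ℝ (m₀ + 1) (fun y => u ε y - u ε 0) x
        = iteratedFDeriv ℝ (m₀ + 1) (u ε) x
          - iteratedFDeriv ℝ (m₀ + 1) (fun _ => u ε 0) x :=
      iteratedFDeriv_sub_apply₂ (hu_smooth ε hε) contDiff_const (m₀ + 1) x
    rw [h1, iteratedFDeriv_const_of_ne (Nat.succ_ne_zero m₀), Pi.zero_apply, sub_zero]
    have e : ‖iteratedFDeriv ℝ (m₀ + 1) (u ε) x‖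
        = ‖fderiv ℝ (iteratedFDeriv ℝ m₀ (u ε)) x‖ := by
      rw [fderiv_iteratedFDeriv]
      simp only [Function.comp_apply, LinearIsometryEquiv.norm_map]
    rw [e]
    exact hbound ε hε hεlt x (hKR hx)
end

section
/- Let α be a positive irrational real number which is algebraic over ℚ. Then there exists M ∈ ℕ such that for every real R > 2 there exist natural numbers k and l with l ≤ R and 1/R^M ≤ |k − lα| ≤ 2/R. -/
/-- Diophantine corollary of Dirichlet's and Liouville's approximation theorems:
for a positive irrational algebraic real `α` there is `M ∈ ℕ` such that for every
`R > 2` there are naturals `k`, `l` with `l ≤ R` and `1/R^M ≤ |k − lα| ≤ 2/R`. -/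
theorem dirichlet_liouville_corollary (α : ℝ) (hα_pos : 0 < α)
    (hα_irr : Irrational α) (hα_alg : IsAlgebraic ℚ α) :
    ∃ M : ℕ, ∀ R : ℝ, 2 < R → ∃ k l : ℕ,
      (l : ℝ) ≤ R ∧ 1 / R ^ M ≤ |(k : ℝ) - l * α| ∧ |(k : ℝ) - l * α| ≤ 2 / R := by
  -- get an integer polynomial with α as root
  obtain ⟨f, f0, fa⟩ := (IsFractionRing.isAlgebraic_iff ℤ ℚ ℝ).mpr hα_alg
  have fa' : Polynomial.eval α (Polynomial.map (algebraMap ℤ ℝ) f) = 0 := by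
    rwa [Polynomial.eval_map, ← Polynomial.aeval_def]
  obtain ⟨A, hA, hL⟩ := Liouville.exists_pos_real_of_irrational_root hα_irr f0 fa'
  set n := f.natDegree with hn
  obtain ⟨m, hm⟩ := pow_unbounded_of_one_lt A (one_lt_two (α := ℝ))
  refine ⟨n + m, fun R hR => ?_⟩
  have hR0 : (0 : ℝ) < R := by linarith
  set N := ⌊R⌋₊ with hN
  have hN2 : 2 ≤ N := Nat.le_floor hR.le
  have hNpos : 0 < N := by omega
  have hNR : (N : ℝ) ≤ R := Nat.floor_le hR0.le
  have hRN1 : R < (N : ℝ) + 1 := Nat.lt_floor_add_one R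
  obtain ⟨j, l, hl0, hlN, hjl⟩ := Real.exists_int_int_abs_mul_sub_le α hNpos
  -- l as a natural number
  have hlα : 0 < (l : ℝ) * α := by
    have : (0 : ℝ) < l := by exact_mod_cast hl0
    positivity
  have hjl1 : |(l : ℝ) * α - j| ≤ 1 / (N + 1) := hjl
  have hN1pos : (0 : ℝ) < (N : ℝ) + 1 := by positivity
  have hle1 : (1 : ℝ) / (N + 1) < 1 := by
    rw [div_lt_one hN1pos]; exact_mod_cast by omega
  -- j is nonnegative
  have hj0 : 0 ≤ j := by
    by_contra hj
    push_neg at hj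
    have hj2 : j ≤ -1 := by omega
    have hj' : (j : ℝ) ≤ -1 := by exact_mod_cast hj2
    have : (1 : ℝ) < (l : ℝ) * α - j := by nlinarith
    have h2 := (le_abs_self ((l : ℝ) * α - j)).trans_lt (hjl1.trans_lt hle1)
    linarith
  refine ⟨j.toNat, l.toNat, ?_, ?_, ?_⟩
  · calc ((l.toNat : ℝ)) = (l : ℝ) := by exact_mod_cast Int.toNat_of_nonneg hl0.le
    _ ≤ (N : ℝ) := by exact_mod_cast hlN
    _ ≤ R := hNR
  · -- lower bound from Liouville
    have hlcast : ((l.toNat : ℝ)) = (l : ℝ) := by exact_mod_cast Int.toNat_of_nonneg hl0.le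
    have hjcast : ((j.toNat : ℝ)) = (j : ℝ) := by exact_mod_cast Int.toNat_of_nonneg hj0
    rw [hlcast, hjcast]
    have hl1 : (1 : ℝ) ≤ (l : ℝ) := by exact_mod_cast hl0
    have hb : ((l.toNat - 1 : ℕ) : ℝ) + 1 = (l : ℝ) := by
      have : 1 ≤ l.toNat := by omega
      push_cast [Nat.cast_sub this]
      simp [hlcast]
    have key := hL j (l.toNat - 1)
    rw [hb] at key
    have hlp : (0 : ℝ) < l := by linarith
    have habs : |(j : ℝ) - l * α| = (l : ℝ) * |α - j / l| := by
      have he : (j : ℝ) - l * α = l * (j / l - α) := by field_simp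
      rw [he, abs_mul, abs_of_pos hlp, abs_sub_comm]
    have hd : |α - (j : ℝ) / l| ≤ |(j : ℝ) - l * α| := by
      rw [habs]
      nlinarith [abs_nonneg (α - (j : ℝ) / l)]
    have hln : (l : ℝ) ^ n ≤ R ^ n := by
      apply pow_le_pow_left₀ (by linarith) (by linarith [hlN, hNR, (by exact_mod_cast hlN : (l:ℝ) ≤ (N:ℝ))])
    have hAR : A ≤ R ^ m := hm.le.trans (pow_le_pow_left₀ (by norm_num) hR.le m)
    have hkey2 : (1 : ℝ) ≤ R ^ n * (|(j : ℝ) - l * α| * R ^ m) := by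
      calc (1 : ℝ) ≤ (l : ℝ) ^ n * (|α - j / l| * A) := key
      _ ≤ R ^ n * (|(j : ℝ) - l * α| * R ^ m) := by
          apply mul_le_mul hln ?_ (by positivity) (by positivity)
          exact mul_le_mul hd hAR hA.le (abs_nonneg _)
    rw [div_le_iff₀ (by positivity), pow_add]
    nlinarith [pow_pos hR0 n, pow_pos hR0 m, abs_nonneg ((j:ℝ) - l * α)]
  · -- upper bound from Dirichlet
    have hlcast : ((l.toNat : ℝ)) = (l : ℝ) := by exact_mod_cast Int.toNat_of_nonneg hl0.le
    have hjcast : ((j.toNat : ℝ)) = (j : ℝ) := by exact_mod_cast Int.toNat_of_nonneg hj0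
    rw [hlcast, hjcast, abs_sub_comm]
    calc |(l : ℝ) * α - j| ≤ 1 / (N + 1) := hjl1
    _ ≤ 2 / R := by
        rw [div_le_div_iff₀ hN1pos hR0]
        linarith
end

section
/- Let f : ℝ → ℂ, let a ≤ b be reals, let h₁, h₂ > 0 and ε > 0. Suppose that f is almost-periodic on [a,b] with periods h₁ and h₂ and tolerance ε, i.e. for i = 1, 2: for all x ∈ [a,b], if x + h_i ∈ [a,b] then |f(x + h_i) − f(x)| ≤ ε. Then for all k, l ∈ ℕ and all x ∈ [a + h₁ + h₂, b − h₁ − h₂]: if x + k h₁ − l h₂ ∈ [a,b], then |f(x + k h₁ − l h₂) − f(x)| ≤ (k + l) ε. -/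
/-- If `f` is almost-periodic on `[a, b]` with periods `h₁`, `h₂` and tolerance `ε`, then
for `x ∈ [a + h₁ + h₂, b − h₁ − h₂]` with `x + k h₁ − l h₂ ∈ [a, b]` one has
`|f(x + k h₁ − l h₂) − f(x)| ≤ (k + l) ε`. -/
theorem almost_periodic_combination (f : ℝ → ℂ) (a b : ℝ) (hab : a ≤ b)
    (h₁ h₂ : ℝ) (hh₁ : 0 < h₁) (hh₂ : 0 < h₂) (ε : ℝ) (hε : 0 < ε)
    (hf₁ : ∀ x ∈ Set.Icc a b, x + h₁ ∈ Set.Icc a b → ‖f (x + h₁) - f x‖ ≤ ε)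
    (hf₂ : ∀ x ∈ Set.Icc a b, x + h₂ ∈ Set.Icc a b → ‖f (x + h₂) - f x‖ ≤ ε) :
    ∀ k l : ℕ, ∀ x ∈ Set.Icc (a + h₁ + h₂) (b - h₁ - h₂),
      x + k * h₁ - l * h₂ ∈ Set.Icc a b →
      ‖f (x + k * h₁ - l * h₂) - f x‖ ≤ ((k : ℝ) + l) * ε := by
  suffices H : ∀ n k l : ℕ, k + l = n → ∀ x ∈ Set.Icc (a + h₁ + h₂) (b - h₁ - h₂),
      x + k * h₁ - l * h₂ ∈ Set.Icc a b →
      ‖f (x + k * h₁ - l * h₂) - f x‖ ≤ ((k : ℝ) + l) * ε by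
    intro k l x hx hy; exact H (k + l) k l rfl x hx hy
  intro n
  induction n with
  | zero =>
    intro k l hkl x hx hy
    obtain ⟨rfl, rfl⟩ := Nat.add_eq_zero.mp hkl
    simp
  | succ n IH =>
    intro k l hkl x hx hy
    obtain ⟨hx1, hx2⟩ := hx
    obtain ⟨hy1, hy2⟩ := hy
    by_cases hxy : x ≤ x + k * h₁ - l * h₂
    · -- k > 0
      have hk : k ≠ 0 := by
        rintro rfl
        have hl : l = 0 := by
          by_contra hl
          have hlp : (0:ℝ) < (l : ℝ) * h₂ :=
            mul_pos (by exact_mod_cast Nat.pos_of_ne_zero hl) hh₂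
          simp only [Nat.cast_zero, zero_mul, add_zero] at hxy
          linarith
        simp [hl] at hkl
      obtain ⟨m, rfl⟩ := Nat.exists_eq_succ_of_ne_zero hk
      have hcast : ((m + 1 : ℕ) : ℝ) = (m : ℝ) + 1 := by push_cast; ring
      have hy' : x + (m : ℕ) * h₁ - l * h₂ ∈ Set.Icc a b := by
        constructor
        · have : x + ((m + 1 : ℕ) : ℝ) * h₁ - l * h₂ ≥ x := hxy
          rw [hcast] at this
          nlinarith
        · have : x + (m : ℝ) * h₁ - l * h₂ ≤ x + ((m : ℝ) + 1) * h₁ - l * h₂ := by nlinarith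
          rw [hcast] at hy2
          push_cast
          linarith
      have hIH := IH m l (by omega) x ⟨hx1, hx2⟩ hy'
      have hstep := hf₁ (x + (m : ℕ) * h₁ - l * h₂) hy' (by
        have : x + (m : ℕ) * h₁ - l * h₂ + h₁ = x + ((m + 1 : ℕ) : ℝ) * h₁ - l * h₂ := by
          rw [hcast]; push_cast; ring
        rw [this]; exact ⟨hy1, hy2⟩)
      have heq : x + ((m + 1 : ℕ) : ℝ) * h₁ - l * h₂
          = x + (m : ℕ) * h₁ - l * h₂ + h₁ := by rw [hcast]; push_cast; ring
      calc ‖f (x + ((m + 1 : ℕ) : ℝ) * h₁ - l * h₂) - f x‖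
          ≤ ‖f (x + (m : ℕ) * h₁ - l * h₂ + h₁) - f (x + (m : ℕ) * h₁ - l * h₂)‖
            + ‖f (x + (m : ℕ) * h₁ - l * h₂) - f x‖ := by
            rw [heq]
            exact norm_sub_le_norm_sub_add_norm_sub _ _ _
        _ ≤ ε + ((m : ℝ) + l) * ε := add_le_add hstep hIH
        _ = (((m + 1 : ℕ) : ℝ) + l) * ε := by rw [hcast]; ring
    · -- l > 0
      push_neg at hxy
      have hl : l ≠ 0 := by
        rintro rfl
        have : (0:ℝ) ≤ (k : ℝ) * h₁ := by positivity
        simp only [Nat.cast_zero, zero_mul, sub_zero] at hxy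
        linarith
      obtain ⟨m, rfl⟩ := Nat.exists_eq_succ_of_ne_zero hl
      have hcast : ((m + 1 : ℕ) : ℝ) = (m : ℝ) + 1 := by push_cast; ring
      have hy' : x + k * h₁ - (m : ℕ) * h₂ ∈ Set.Icc a b := by
        constructor
        · have : x + (k : ℝ) * h₁ - ((m : ℝ) + 1) * h₂ ≥ a := by rw [← hcast]; exact hy1
          push_cast; linarith
        · have : x + (k : ℝ) * h₁ - ((m : ℝ) + 1) * h₂ < x := by rw [← hcast]; exact hxy
          push_cast; linarith
      have hIH := IH k m (by omega) x ⟨hx1, hx2⟩ hy'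
      have heq : x + k * h₁ - ((m + 1 : ℕ) : ℝ) * h₂
          = x + k * h₁ - (m : ℕ) * h₂ - h₂ := by rw [hcast]; push_cast; ring
      have hstep := hf₂ (x + k * h₁ - ((m + 1 : ℕ) : ℝ) * h₂) ⟨hy1, hy2⟩ (by
        have : x + k * h₁ - ((m + 1 : ℕ) : ℝ) * h₂ + h₂ = x + k * h₁ - (m : ℕ) * h₂ := by
          rw [hcast]; ring
        rw [this]; exact hy')
      rw [show x + (k : ℝ) * h₁ - ((m + 1 : ℕ) : ℝ) * h₂ + h₂
          = x + k * h₁ - (m : ℕ) * h₂ from by rw [hcast]; ring] at hstep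
      calc ‖f (x + (k : ℝ) * h₁ - ((m + 1 : ℕ) : ℝ) * h₂) - f x‖
          ≤ ‖f (x + k * h₁ - (m : ℕ) * h₂) - f (x + (k : ℝ) * h₁ - ((m + 1 : ℕ) : ℝ) * h₂)‖
            + ‖f (x + k * h₁ - (m : ℕ) * h₂) - f x‖ := by
            have t := norm_sub_le_norm_sub_add_norm_sub
              (f (x + (k : ℝ) * h₁ - ((m + 1 : ℕ) : ℝ) * h₂))
              (f (x + k * h₁ - (m : ℕ) * h₂)) (f x)
            rwa [norm_sub_rev (f (x + (k : ℝ) * h₁ - ((m + 1 : ℕ) : ℝ) * h₂))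
              (f (x + k * h₁ - (m : ℕ) * h₂))] at t
        _ ≤ ε + ((k : ℝ) + m) * ε := add_le_add hstep hIH
        _ = ((k : ℝ) + ((m + 1 : ℕ) : ℝ)) * ε := by rw [hcast]; ring
end

section
/- Let (f_ε)_{ε∈(0,1)} and (g_ε)_{ε∈(0,1)} be moderate, c-bounded nets of smooth maps ℝ^d → ℝ^d. Then the composition net (g_ε ∘ f_ε)_{ε∈(0,1)} is a moderate, c-bounded net of smooth maps ℝ^d → ℝ^d. -/
/-- Moderateness for a net of smooth real-valued functions on `ℝ^d`. -/
def ModerateReal {d : ℕ} (u : ℝ → (Fin d → ℝ) → ℝ) : Prop :=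
  ∀ K : Set (Fin d → ℝ), IsCompact K → ∀ n : ℕ,
    ∃ b : ℝ, ∃ C > (0 : ℝ), ∃ ε₀ > (0 : ℝ), ∀ ε ∈ Set.Ioo (0 : ℝ) 1, ε < ε₀ →
      ∀ x ∈ K, ‖iteratedFDeriv ℝ n (u ε) x‖ ≤ C * ε ^ b

/-- A net of maps `ℝ^d → ℝ^d` is moderate if each of its `d` component nets is moderate. -/
def ModerateVec {d : ℕ} (u : ℝ → (Fin d → ℝ) → (Fin d → ℝ)) : Prop :=
  ∀ i : Fin d, ModerateReal (fun ε x => u ε x i)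

/-- A net of maps `ℝ^d → ℝ^d` is c-bounded if it maps compact sets into compact sets,
uniformly for small `ε`. -/
def CBounded {d : ℕ} (u : ℝ → (Fin d → ℝ) → (Fin d → ℝ)) : Prop :=
  ∀ K : Set (Fin d → ℝ), IsCompact K →
    ∃ K' : Set (Fin d → ℝ), IsCompact K' ∧
      ∃ ε₀ > (0 : ℝ), ∀ ε ∈ Set.Ioo (0 : ℝ) 1, ε < ε₀ → u ε '' K ⊆ K'

/-- The norm of an iterated derivative of a map into `ℝ^d` is bounded by the sum of the
norms of the iterated derivatives of its components. -/
lemma norm_iteratedFDeriv_pi_le {d : ℕ} {u : (Fin d → ℝ) → (Fin d → ℝ)}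
    (hu : ContDiff ℝ (⊤ : ℕ∞) u) (n : ℕ) (x : Fin d → ℝ) :
    ‖iteratedFDeriv ℝ n u x‖ ≤ ∑ i, ‖iteratedFDeriv ℝ n (fun y => u y i) x‖ := by
  have key : ∀ i : Fin d, iteratedFDeriv ℝ n (fun y => u y i) x
      = (ContinuousLinearMap.proj i : ((Fin d → ℝ)) →L[ℝ] ℝ).compContinuousMultilinearMap
          (iteratedFDeriv ℝ n u x) := fun i =>
    ContinuousLinearMap.iteratedFDeriv_comp_left
      (ContinuousLinearMap.proj (R := ℝ) (φ := fun _ : Fin d => ℝ) i) (x := x) hu.contDiffAt (by exact_mod_cast le_top)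
  refine ContinuousMultilinearMap.opNorm_le_bound ?_ ?_
  · positivity
  · intro m
    have hprod : (0 : ℝ) ≤ ∏ j, ‖m j‖ := by positivity
    have hsum : (0 : ℝ) ≤ (∑ i, ‖iteratedFDeriv ℝ n (fun y => u y i) x‖) * ∏ j, ‖m j‖ := by
      positivity
    refine (pi_norm_le_iff_of_nonneg hsum).2 fun i => ?_
    have h1 : ‖iteratedFDeriv ℝ n u x m i‖ = ‖iteratedFDeriv ℝ n (fun y => u y i) x m‖ := by
      rw [key i]; rfl
    rw [h1]
    calc ‖iteratedFDeriv ℝ n (fun y => u y i) x m‖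
        ≤ ‖iteratedFDeriv ℝ n (fun y => u y i) x‖ * ∏ j, ‖m j‖ :=
          ContinuousMultilinearMap.le_opNorm _ m
      _ ≤ (∑ i', ‖iteratedFDeriv ℝ n (fun y => u y i') x‖) * ∏ j, ‖m j‖ := by
          gcongr
          exact Finset.single_le_sum (f := fun i' => ‖iteratedFDeriv ℝ n (fun y => u y i') x‖)
            (fun _ _ => norm_nonneg _) (Finset.mem_univ i)

/-- Finitely many moderate-type bounds can be combined into a single uniform one. -/
lemma exists_uniform_bound {ι X : Type*} [Fintype ι] {K : Set X} (v : ι → ℝ → X → ℝ)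
    (h : ∀ i, ∃ b : ℝ, ∃ C > (0 : ℝ), ∃ ε₀ > (0 : ℝ), ∀ ε ∈ Set.Ioo (0 : ℝ) 1, ε < ε₀ →
      ∀ x ∈ K, v i ε x ≤ C * ε ^ b) :
    ∃ b : ℝ, ∃ C > (0 : ℝ), ∃ ε₀ > (0 : ℝ), ∀ ε ∈ Set.Ioo (0 : ℝ) 1, ε < ε₀ →
      ∀ x ∈ K, ∀ i, v i ε x ≤ C * ε ^ b := by
  rcases isEmpty_or_nonempty ι with hι | hι
  · exact ⟨0, 1, one_pos, 1, one_pos, fun ε _ _ x _ i => hι.elim i⟩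
  choose b C hC ε₀ hε₀ hbd using h
  refine ⟨Finset.univ.inf' Finset.univ_nonempty b,
    Finset.univ.sup' Finset.univ_nonempty C, ?_,
    Finset.univ.inf' Finset.univ_nonempty ε₀, ?_, ?_⟩
  · exact lt_of_lt_of_le (hC (Classical.arbitrary ι))
      (Finset.le_sup' C (Finset.mem_univ _))
  · exact (Finset.lt_inf'_iff _).2 fun i _ => hε₀ i
  · intro ε hε hlt x hx i
    have h1 := hbd i ε hε
      (lt_of_lt_of_le hlt (Finset.inf'_le _ (Finset.mem_univ i))) x hx
    refine h1.trans (mul_le_mul (Finset.le_sup' C (Finset.mem_univ i))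
      (Real.rpow_le_rpow_of_exponent_ge hε.1 hε.2.le
        (Finset.inf'_le _ (Finset.mem_univ i)))
      (Real.rpow_nonneg hε.1.le _)
      (le_trans (hC i).le (Finset.le_sup' C (Finset.mem_univ i))))

/-- The composition of two moderate, c-bounded nets of smooth maps `ℝ^d → ℝ^d` is again
a moderate, c-bounded net of smooth maps. -/
theorem composition_moderate_cbounded {d : ℕ}
    (f g : ℝ → (Fin d → ℝ) → (Fin d → ℝ))
    (hf_smooth : ∀ ε ∈ Set.Ioo (0 : ℝ) 1, ContDiff ℝ (⊤ : ℕ∞) (f ε))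
    (hg_smooth : ∀ ε ∈ Set.Ioo (0 : ℝ) 1, ContDiff ℝ (⊤ : ℕ∞) (g ε))
    (hf_mod : ModerateVec f) (hf_cb : CBounded f)
    (hg_mod : ModerateVec g) (hg_cb : CBounded g) :
    (∀ ε ∈ Set.Ioo (0 : ℝ) 1, ContDiff ℝ (⊤ : ℕ∞) (g ε ∘ f ε)) ∧
      ModerateVec (fun ε => g ε ∘ f ε) ∧ CBounded (fun ε => g ε ∘ f ε) := by
  refine ⟨fun ε hε => (hg_smooth ε hε).comp (hf_smooth ε hε), ?_, ?_⟩
  · -- Moderateness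
    intro i K hK n
    -- K' : compact set containing the images f ε '' K
    obtain ⟨K', hK', ε₁, hε₁, hmaps⟩ := hf_cb K hK
    -- uniform bound for the derivatives of the component of g on K', orders ≤ n
    obtain ⟨bg, Cg, hCg, ε₂, hε₂, hgbd⟩ :=
      exists_uniform_bound (K := K')
        (fun (j : Fin (n + 1)) ε y => ‖iteratedFDeriv ℝ (j : ℕ) (fun x => g ε x i) y‖)
        (fun j => hg_mod i K' hK' (j : ℕ))
    -- uniform bound for the derivatives of all components of f on K, orders ≤ n
    obtain ⟨bf, Cf, hCf, ε₃, hε₃, hfbd⟩ :=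
      exists_uniform_bound (K := K)
        (fun (p : Fin (n + 1) × Fin d) ε x =>
          ‖iteratedFDeriv ℝ (p.1 : ℕ) (fun y => f ε y p.2) x‖)
        (fun p => hf_mod p.2 K hK (p.1 : ℕ))
    set bf' : ℝ := min bf 0 with hbf'
    set Cf' : ℝ := max 1 (d * Cf) with hCf'
    have hCf'1 : (1 : ℝ) ≤ Cf' := le_max_left _ _
    refine ⟨bg + bf' * n, (n.factorial : ℝ) * Cg * Cf' ^ n, by positivity,
      min ε₁ (min ε₂ ε₃), by positivity, ?_⟩
    intro ε hε hlt x hx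
    have hlt₁ : ε < ε₁ := lt_of_lt_of_le hlt (min_le_left _ _)
    have hlt₂ : ε < ε₂ := lt_of_lt_of_le hlt ((min_le_right _ _).trans (min_le_left _ _))
    have hlt₃ : ε < ε₃ := lt_of_lt_of_le hlt ((min_le_right _ _).trans (min_le_right _ _))
    have hfx : f ε x ∈ K' := hmaps ε hε hlt₁ ⟨x, hx, rfl⟩
    have hεpos := hε.1
    have hε1 := hε.2
    -- auxiliary rpow facts
    have hrpow_bf : ε ^ bf ≤ ε ^ bf' :=
      Real.rpow_le_rpow_of_exponent_ge hεpos hε1.le (min_le_left _ _)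
    have hone_le : (1 : ℝ) ≤ ε ^ bf' := by
      have : ε ^ (0 : ℝ) ≤ ε ^ bf' :=
        Real.rpow_le_rpow_of_exponent_ge hεpos hε1.le (min_le_right _ _)
      simpa using this
    set D : ℝ := Cf' * ε ^ bf' with hD
    have hD1 : (1 : ℝ) ≤ D := by
      have := mul_le_mul hCf'1 hone_le zero_le_one (zero_le_one.trans hCf'1)
      simpa using this
    -- bound for derivatives of f ε (vector-valued) on K
    have hfD : ∀ j : ℕ, 1 ≤ j → j ≤ n → ‖iteratedFDeriv ℝ j (f ε) x‖ ≤ D ^ j := by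
      intro j hj1 hjn
      have hsum : ‖iteratedFDeriv ℝ j (f ε) x‖
          ≤ ∑ i' : Fin d, ‖iteratedFDeriv ℝ j (fun y => f ε y i') x‖ :=
        norm_iteratedFDeriv_pi_le (hf_smooth ε hε) j x
      have hcomp : ∑ i' : Fin d, ‖iteratedFDeriv ℝ j (fun y => f ε y i') x‖
          ≤ (d : ℝ) * (Cf * ε ^ bf) := by
        calc ∑ i' : Fin d, ‖iteratedFDeriv ℝ j (fun y => f ε y i') x‖
            ≤ ∑ _i' : Fin d, Cf * ε ^ bf :=
              Finset.sum_le_sum fun i' _ => hfbd ε hε hlt₃ x hx (⟨j, by omega⟩, i')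
          _ = (d : ℝ) * (Cf * ε ^ bf) := by
              simp [Finset.sum_const, mul_comm]
      have hDle : (d : ℝ) * (Cf * ε ^ bf) ≤ D := by
        calc (d : ℝ) * (Cf * ε ^ bf) = ((d : ℝ) * Cf) * ε ^ bf := by ring
          _ ≤ Cf' * ε ^ bf' := by
              have h0 : (0 : ℝ) ≤ (d : ℝ) * Cf := by positivity
              exact mul_le_mul (le_max_right _ _) hrpow_bf
                (Real.rpow_nonneg hεpos.le _) (zero_le_one.trans hCf'1)
          _ = D := rfl
      have : ‖iteratedFDeriv ℝ j (f ε) x‖ ≤ D := (hsum.trans hcomp).trans hDle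
      exact this.trans (le_self_pow₀ hD1 (by omega))
    -- the derivative bound for the composition
    have hgi : ContDiff ℝ (⊤ : ℕ∞) (fun y => g ε y i) := (contDiff_pi.1 (hg_smooth ε hε)) i
    have hC : ∀ j : ℕ, j ≤ n → ‖iteratedFDeriv ℝ j (fun y => g ε y i) (f ε x)‖ ≤ Cg * ε ^ bg :=
      fun j hj => hgbd ε hε hlt₂ (f ε x) hfx ⟨j, by omega⟩
    have hmain := norm_iteratedFDeriv_comp_le hgi (hf_smooth ε hε) (by exact_mod_cast le_top) x hC hfD
    have heq : (n.factorial : ℝ) * (Cg * ε ^ bg) * D ^ n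
        = (n.factorial : ℝ) * Cg * Cf' ^ n * ε ^ (bg + bf' * n) := by
      rw [hD, Real.rpow_add hεpos, mul_pow, ← Real.rpow_natCast (ε ^ bf') n,
        ← Real.rpow_mul hεpos.le]
      ring
    calc ‖iteratedFDeriv ℝ n (fun x => (g ε ∘ f ε) x i) x‖
        = ‖iteratedFDeriv ℝ n ((fun y => g ε y i) ∘ f ε) x‖ := rfl
      _ ≤ (n.factorial : ℝ) * (Cg * ε ^ bg) * D ^ n := hmain
      _ = (n.factorial : ℝ) * Cg * Cf' ^ n * ε ^ (bg + bf' * n) := heq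
  · -- c-boundedness
    intro K hK
    obtain ⟨K', hK', ε₁, hε₁, h₁⟩ := hf_cb K hK
    obtain ⟨K'', hK'', ε₂, hε₂, h₂⟩ := hg_cb K' hK'
    refine ⟨K'', hK'', min ε₁ ε₂, lt_min hε₁ hε₂, ?_⟩
    intro ε hε hlt
    rintro _ ⟨x, hx, rfl⟩
    exact h₂ ε hε (lt_of_lt_of_le hlt (min_le_right _ _))
      ⟨f ε x, h₁ ε hε (lt_of_lt_of_le hlt (min_le_left _ _)) ⟨x, hx, rfl⟩, rfl⟩
end
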